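/- arXiv:1602.07567 — 3 statements merged into one kernel-verified Lean document; each statement's English description precedes it below -/
import Mathlib

section
/- Let g₁ > 0 and let f : ℝ × [0,1] × ℝ → ℝ be C¹ with f(0,x,t) = 0 for all x,t and |∂f/∂z (z,x,t)| ≤ g₁ for all (z,x,t). Let z : [0,1] × [t₀,∞) → ℝ be a classical (C²) solution of z_tt = z_xx + f(z,x,t) with z(0,t) = 0 and z_x(1,t) = 0 for all t ≥ t₀. Then for every t ≥ t₀ and every x ∈ [0,1], z(x,t)² ≤ e^{(2g₁/π)(t−t₀)} ∫₀¹ ( z_x(ξ,t₀)² + z_t(ξ,t₀)² ) dξ. -/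
open MeasureTheory Real Set Filter

/-- derivative of a section in the first variable -/
lemma sectX_hasDerivAt (Z : ℝ × ℝ → ℝ) (hZ : Differentiable ℝ Z) (x t : ℝ) :
    HasDerivAt (fun y => Z (y, t)) (fderiv ℝ Z (x, t) (1, 0)) x := by
  have h := (hZ (x, t)).hasFDerivAt.comp_hasDerivAt x
    ((hasDerivAt_id x).prodMk (hasDerivAt_const x t))
  simp at h
  exact h

lemma sectT_hasDerivAt (Z : ℝ × ℝ → ℝ) (hZ : Differentiable ℝ Z) (x t : ℝ) :
    HasDerivAt (fun s => Z (x, s)) (fderiv ℝ Z (x, t) (0, 1)) t := by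
  have h := (hZ (x, t)).hasFDerivAt.comp_hasDerivAt t
    ((hasDerivAt_const t x).prodMk (hasDerivAt_id t))
  exact h

lemma papply_contDiff (Z : ℝ × ℝ → ℝ) (hZ : ContDiff ℝ 2 Z) (v : ℝ × ℝ) :
    ContDiff ℝ 1 (fun q => fderiv ℝ Z q v) :=
  (hZ.fderiv_right (by norm_num)).clm_apply contDiff_const

lemma papply_fderiv (Z : ℝ × ℝ → ℝ) (hZ : ContDiff ℝ 2 Z) (v u q : ℝ × ℝ) :
    fderiv ℝ (fun p => fderiv ℝ Z p v) q u = fderiv ℝ (fderiv ℝ Z) q u v := by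
  have hd : DifferentiableAt ℝ (fderiv ℝ Z) q :=
    ((hZ.fderiv_right (by norm_num : (1:WithTop ℕ∞) + 1 ≤ 2)).differentiable one_ne_zero) q
  have h := ((ContinuousLinearMap.apply ℝ ℝ v).hasFDerivAt.comp q hd.hasFDerivAt).fderiv
  calc fderiv ℝ (fun p => fderiv ℝ Z p v) q u
      = fderiv ℝ ((ContinuousLinearMap.apply ℝ ℝ v) ∘ (fderiv ℝ Z)) q u := rfl
    _ = fderiv ℝ (fderiv ℝ Z) q u v := by rw [h]; rfl

lemma snd_symm (Z : ℝ × ℝ → ℝ) (hZ : ContDiff ℝ 2 Z) (q u v : ℝ × ℝ) :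
    fderiv ℝ (fderiv ℝ Z) q u v = fderiv ℝ (fderiv ℝ Z) q v u := by
  have hd : ∀ y, HasFDerivAt Z (fderiv ℝ Z y) y :=
    fun y => ((hZ.differentiable (by norm_num)) y).hasFDerivAt
  have hx : HasFDerivAt (fderiv ℝ Z) (fderiv ℝ (fderiv ℝ Z) q) q :=
    (((hZ.fderiv_right (by norm_num : (1:WithTop ℕ∞) + 1 ≤ 2)).differentiable one_ne_zero) q).hasFDerivAt
  exact second_derivative_symmetric hd hx u v


lemma variance_ineq (h : ℝ → ℝ) (hc : Continuous h) :
    (∫ x in (0:ℝ)..1, h x) ^ 2 ≤ ∫ x in (0:ℝ)..1, (h x) ^ 2 := by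
  set m := ∫ x in (0:ℝ)..1, h x with hm
  have h1 : (0:ℝ) ≤ ∫ x in (0:ℝ)..1, (h x - m)^2 :=
    intervalIntegral.integral_nonneg zero_le_one (fun x _ => sq_nonneg _)
  have h2 : ∫ x in (0:ℝ)..1, (h x - m)^2
      = (∫ x in (0:ℝ)..1, (h x)^2) - (2*m)*m + m^2 := by
    have e : (fun x => (h x - m)^2) = fun x => (h x)^2 - (2*m) * h x + m^2 := by
      funext x; ring
    rw [e, intervalIntegral.integral_add, intervalIntegral.integral_sub,
      intervalIntegral.integral_const_mul, intervalIntegral.integral_const]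
    · simp [← hm]
    · exact (hc.pow 2).intervalIntegrable _ _
    · exact (continuous_const.mul hc).intervalIntegrable _ _
    · exact ((hc.pow 2).sub (continuous_const.mul hc)).intervalIntegrable _ _
    · exact continuous_const.intervalIntegrable _ _
  nlinarith [h1, h2]


lemma riccati_aux1 (p s c : ℝ) (hs : s ≠ 0) (hp : s^2 + c^2 = 1) :
    -(p/2)^2 / s^2 = p/2 * ((-s*(p/2)*s - c*(c*(p/2))) / s^2) := by
  field_simp
  linear_combination p^2 * hp

lemma riccati_aux3 (p s c W D : ℝ) (hs : s ≠ 0) (hp : s^2 + c^2 = 1) :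
    -(D - (p/2*(c/s))*W)^2
      = -(D^2 - (p/2)^2*W^2) + (-(p/2)^2/s^2 * W^2 + (p/2*(c/s))*(2*W*D)) := by
  field_simp
  linear_combination (-p^2*W^2) * hp

lemma riccati_aux2 (p s c : ℝ) (hs : s ≠ 0) (hp : s^2 + c^2 = 1) :
    -(p/2)^2 / s^2 + (p/2 * (c/s))^2 = -(p/2)^2 := by
  field_simp
  linear_combination p^2 * hp

set_option maxHeartbeats 1000000 in
lemma wirtinger (w : ℝ → ℝ) (hw : ContDiff ℝ 1 w) (h0 : w 0 = 0) :
    (π/2)^2 * ∫ x in (0:ℝ)..1, (w x)^2 ≤ ∫ x in (0:ℝ)..1, (deriv w x)^2 := by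
  have hw' : Continuous (deriv w) := hw.continuous_deriv le_rfl
  have hwc : Continuous w := hw.continuous
  have hwd : ∀ x, HasDerivAt w (deriv w x) x :=
    fun x => ((hw.differentiable one_ne_zero) x).hasDerivAt
  set g : ℝ → ℝ := fun x => (deriv w x)^2 - (π/2)^2 * (w x)^2 with hg
  have hgc : Continuous g := (hw'.pow 2).sub (continuous_const.mul (hwc.pow 2))
  set c : ℝ → ℝ := fun x => (π/2) * (Real.cos (π/2*x) / Real.sin (π/2*x)) with hc
  set F : ℝ → ℝ := fun x => (∫ ξ in x..1, g ξ) + c x * (w x)^2 with hF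
  have hintAll : ∀ x : ℝ, HasDerivAt (fun y => ∫ ξ in y..1, g ξ) (-(g x)) x := by
    intro x
    have h1 : HasDerivAt (fun y => ∫ ξ in (1:ℝ)..y, g ξ) (g x) x :=
      intervalIntegral.integral_hasDerivAt_right (hgc.intervalIntegrable _ _)
        (hgc.stronglyMeasurableAtFilter _ _) hgc.continuousAt
    have e : (fun y => ∫ ξ in y..1, g ξ) = fun y => -(∫ ξ in (1:ℝ)..y, g ξ) := by
      funext y; rw [intervalIntegral.integral_symm]
    rw [e]; exact h1.neg
  have hsin : ∀ x : ℝ, 0 < x → x < 2 → 0 < Real.sin (π/2*x) := by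
    intro x h1 h2
    apply Real.sin_pos_of_pos_of_lt_pi (by positivity)
    nlinarith [pi_pos]
  have hFderiv : ∀ x ∈ Ioo (0:ℝ) 2, HasDerivAt F (-(deriv w x - c x * w x)^2) x := by
    intro x hx
    have hs := hsin x hx.1 hx.2
    have hsne : Real.sin (π/2*x) ≠ 0 := ne_of_gt hs
    have hu : HasDerivAt (fun y : ℝ => π/2*y) (π/2) x := by
      simpa using (hasDerivAt_id x).const_mul (π/2)
    have hcos : HasDerivAt (fun y => Real.cos (π/2*y)) (-Real.sin (π/2*x) * (π/2)) x :=
      (Real.hasDerivAt_cos _).comp x hu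
    have hsin' : HasDerivAt (fun y => Real.sin (π/2*y)) (Real.cos (π/2*x) * (π/2)) x :=
      (Real.hasDerivAt_sin _).comp x hu
    have hcd : HasDerivAt c (-(π/2)^2 / (Real.sin (π/2*x))^2) x := by
      have h2 := (hcos.div hsin' hsne).const_mul (π/2)
      exact h2.congr_deriv (riccati_aux1 π _ _ hsne (Real.sin_sq_add_cos_sq (π/2*x))).symm
    have hw2 : HasDerivAt (fun y => (w y)^2) (2 * w x * deriv w x) x := by
      have := (hwd x).pow 2
      simp at this
      exact this
    have htot := (hintAll x).add (hcd.mul hw2)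
    exact htot.congr_deriv (by
      rw [hg]
      exact (riccati_aux3 π _ _ (w x) (deriv w x) hsne (Real.sin_sq_add_cos_sq (π/2*x))).symm)
  have hF1 : F 1 = 0 := by
    rw [hF]
    simp [hc, mul_one, Real.cos_pi_div_two, intervalIntegral.integral_same]
  have hnonneg : ∀ x ∈ Ioo (0:ℝ) 1, 0 ≤ F x := by
    intro x hx
    have hsub : Icc x 1 ⊆ Ioo 0 2 :=
      fun y hy => ⟨lt_of_lt_of_le hx.1 hy.1, lt_of_le_of_lt hy.2 one_lt_two⟩
    have hanti : AntitoneOn F (Icc x 1) := by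
      apply antitoneOn_of_deriv_nonpos (convex_Icc x 1)
      · exact fun y hy => ((hFderiv y (hsub hy)).continuousAt).continuousWithinAt
      · intro y hy
        rw [interior_Icc] at hy
        exact ((hFderiv y (hsub (Ioo_subset_Icc_self hy))).differentiableAt).differentiableWithinAt
      · intro y hy
        rw [interior_Icc] at hy
        rw [(hFderiv y (hsub (Ioo_subset_Icc_self hy))).deriv]
        exact neg_nonpos.mpr (sq_nonneg _)
    have h2 := hanti (left_mem_Icc.mpr hx.2.le) (right_mem_Icc.mpr hx.2.le) hx.2.le
    rw [hF1] at h2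
    exact h2
  have hslope : Tendsto (fun x => w x / x) (nhdsWithin 0 (Ioi 0)) (nhds (deriv w 0)) := by
    have h1 := (hwd 0)
    rw [hasDerivAt_iff_tendsto_slope] at h1
    have h2 := h1.mono_left
      (nhdsWithin_mono 0 (fun x (hx : x ∈ Ioi 0) => (ne_of_gt hx : x ≠ 0)))
    refine h2.congr' ?_
    filter_upwards [self_mem_nhdsWithin] with x hx
    simp [slope_def_field, h0]
  have hsinx : Tendsto (fun x => Real.sin (π/2*x) / x) (nhdsWithin 0 (Ioi 0)) (nhds (π/2)) := by
    have hd : HasDerivAt (fun x => Real.sin (π/2*x)) (π/2) 0 := by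
      have hu : HasDerivAt (fun y : ℝ => π/2*y) (π/2) 0 := by
        simpa using (hasDerivAt_id (0:ℝ)).const_mul (π/2)
      have := (Real.hasDerivAt_sin (π/2*0)).comp 0 hu
      simp at this
      exact this
    rw [hasDerivAt_iff_tendsto_slope] at hd
    have h2 := hd.mono_left
      (nhdsWithin_mono 0 (fun x (hx : x ∈ Ioi 0) => (ne_of_gt hx : x ≠ 0)))
    refine h2.congr' ?_
    filter_upwards [self_mem_nhdsWithin] with x hx
    simp [slope_def_field]
  have hxsin : Tendsto (fun x => x / Real.sin (π/2*x)) (nhdsWithin 0 (Ioi 0)) (nhds (2/π)) := by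
    have h1 := hsinx.inv₀ (by positivity : (π/2 : ℝ) ≠ 0)
    have e : (fun x => (Real.sin (π/2*x) / x)⁻¹) = fun x => x / Real.sin (π/2*x) := by
      funext x; rw [inv_div]
    rw [e] at h1
    convert h1 using 2
    rw [inv_div]
  have hcosl : Tendsto (fun x => (π/2) * Real.cos (π/2*x)) (nhdsWithin 0 (Ioi 0)) (nhds (π/2)) := by
    have h1 : Continuous (fun x : ℝ => (π/2) * Real.cos (π/2*x)) :=
      continuous_const.mul (Real.continuous_cos.comp (continuous_const.mul continuous_id))
    have h2 : Tendsto (fun x : ℝ => (π/2) * Real.cos (π/2*x)) (nhds 0)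
        (nhds ((π/2) * Real.cos (π/2*0))) := h1.tendsto 0
    rw [mul_zero, Real.cos_zero, mul_one] at h2
    exact h2.mono_left (nhdsWithin_le_nhds (s := Ioi (0:ℝ)))
  have hwl : Tendsto w (nhdsWithin 0 (Ioi 0)) (nhds 0) := by
    have := (hwc.tendsto 0).mono_left (nhdsWithin_le_nhds (s := Ioi (0:ℝ)))
    rwa [h0] at this
  have h2 : Tendsto (fun x => c x * (w x)^2) (nhdsWithin 0 (Ioi 0)) (nhds 0) := by
    have hprod := ((hcosl.mul hxsin).mul hslope).mul hwl
    have he : ∀ᶠ x in nhdsWithin 0 (Ioi 0),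
        ((π/2) * Real.cos (π/2*x) * (x / Real.sin (π/2*x)) * (w x / x)) * w x
          = c x * (w x)^2 := by
      filter_upwards [self_mem_nhdsWithin] with x hx
      have hxne : (x:ℝ) ≠ 0 := ne_of_gt hx
      rcases eq_or_ne (Real.sin (π/2*x)) 0 with hs | hs
      · simp [hc, hs, div_zero, mul_zero, zero_mul]
      · show _ = π/2 * (Real.cos (π/2*x) / Real.sin (π/2*x)) * (w x)^2
        field_simp
    have := hprod.congr' he
    simpa using this
  have hlim : Tendsto F (nhdsWithin 0 (Ioi 0)) (nhds (∫ ξ in (0:ℝ)..1, g ξ)) := by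
    have h1 : Tendsto (fun x => ∫ ξ in x..1, g ξ) (nhdsWithin 0 (Ioi 0))
        (nhds (∫ ξ in (0:ℝ)..1, g ξ)) :=
      ((hintAll 0).continuousAt.continuousWithinAt : _)
    have h3 := h1.add h2
    rw [add_zero] at h3
    exact h3
  have h0le : 0 ≤ ∫ ξ in (0:ℝ)..1, g ξ := by
    apply ge_of_tendsto hlim
    filter_upwards [Ioo_mem_nhdsGT_of_mem (⟨le_rfl, zero_lt_one⟩ : (0:ℝ) ∈ Ico (0:ℝ) 1)]
      with x hx
    exact hnonneg x hx
  have hsplit : ∫ ξ in (0:ℝ)..1, g ξ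
      = (∫ x in (0:ℝ)..1, (deriv w x)^2) - (π/2)^2 * ∫ x in (0:ℝ)..1, (w x)^2 := by
    rw [hg]
    beta_reduce
    rw [intervalIntegral.integral_sub (f := fun x => (deriv w x)^2) (g := fun x => (π/2)^2 * (w x)^2) ((hw'.pow 2).intervalIntegrable _ _)
      ((continuous_const.mul (hwc.pow 2)).intervalIntegrable _ _),
      intervalIntegral.integral_const_mul]
  linarith

noncomputable def pX (z : ℝ → ℝ → ℝ) : ℝ × ℝ → ℝ :=
  fun q => fderiv ℝ (fun p : ℝ × ℝ => z p.1 p.2) q (1, 0)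

noncomputable def pT (z : ℝ → ℝ → ℝ) : ℝ × ℝ → ℝ :=
  fun q => fderiv ℝ (fun p : ℝ × ℝ => z p.1 p.2) q (0, 1)

noncomputable def pXX (z : ℝ → ℝ → ℝ) : ℝ × ℝ → ℝ := fun q => fderiv ℝ (pX z) q (1, 0)
noncomputable def pXT (z : ℝ → ℝ → ℝ) : ℝ × ℝ → ℝ := fun q => fderiv ℝ (pX z) q (0, 1)
noncomputable def pTX (z : ℝ → ℝ → ℝ) : ℝ × ℝ → ℝ := fun q => fderiv ℝ (pT z) q (1, 0)
noncomputable def pTT (z : ℝ → ℝ → ℝ) : ℝ × ℝ → ℝ := fun q => fderiv ℝ (pT z) q (0, 1)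

lemma papply2_cont (w : ℝ × ℝ → ℝ) (hw : ContDiff ℝ 1 w) (v : ℝ × ℝ) :
    Continuous (fun q => fderiv ℝ w q v) :=
  (ContinuousLinearMap.apply ℝ ℝ v).continuous.comp (hw.continuous_fderiv one_ne_zero)

section main
variable (z : ℝ → ℝ → ℝ) (hz : ContDiff ℝ 2 (fun q : ℝ × ℝ => z q.1 q.2))
include hz

lemma pX_contDiff : ContDiff ℝ 1 (pX z) := papply_contDiff _ hz _
lemma pT_contDiff : ContDiff ℝ 1 (pT z) := papply_contDiff _ hz _

lemma z_sectX (x t : ℝ) : HasDerivAt (fun y => z y t) (pX z (x, t)) x :=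
  sectX_hasDerivAt _ (hz.differentiable (by norm_num)) x t

lemma z_sectT (x t : ℝ) : HasDerivAt (fun s => z x s) (pT z (x, t)) t :=
  sectT_hasDerivAt _ (hz.differentiable (by norm_num)) x t

lemma pX_sectX (x t : ℝ) : HasDerivAt (fun y => pX z (y, t)) (pXX z (x, t)) x :=
  sectX_hasDerivAt _ ((pX_contDiff z hz).differentiable one_ne_zero) x t

lemma pX_sectT (x t : ℝ) : HasDerivAt (fun s => pX z (x, s)) (pXT z (x, t)) t :=
  sectT_hasDerivAt _ ((pX_contDiff z hz).differentiable one_ne_zero) x t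

lemma pT_sectX (x t : ℝ) : HasDerivAt (fun y => pT z (y, t)) (pTX z (x, t)) x :=
  sectX_hasDerivAt _ ((pT_contDiff z hz).differentiable one_ne_zero) x t

lemma pT_sectT (x t : ℝ) : HasDerivAt (fun s => pT z (x, s)) (pTT z (x, t)) t :=
  sectT_hasDerivAt _ ((pT_contDiff z hz).differentiable one_ne_zero) x t

lemma deriv_sectX (x t : ℝ) : deriv (fun y => z y t) x = pX z (x, t) :=
  (z_sectX z hz x t).deriv

lemma deriv_sectT (x t : ℝ) : deriv (fun s => z x s) t = pT z (x, t) :=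
  (z_sectT z hz x t).deriv

lemma pXT_eq_pTX : pXT z = pTX z := by
  funext q
  have h1 := papply_fderiv _ hz (1, 0) (0, 1) q
  have h2 := papply_fderiv _ hz (0, 1) (1, 0) q
  have h3 := snd_symm _ hz q (0, 1) (1, 0)
  exact h1.trans (h3.trans h2.symm)

lemma En_hasDerivAt (t1 : ℝ) :
    HasDerivAt (fun s => ∫ ξ in (0:ℝ)..1, ((pX z (ξ, s))^2 + (pT z (ξ, s))^2))
      (∫ ξ in (0:ℝ)..1,
        (2 * pX z (ξ, t1) * pXT z (ξ, t1) + 2 * pT z (ξ, t1) * pTT z (ξ, t1))) t1 := by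
  have hpXc : Continuous (pX z) := (pX_contDiff z hz).continuous
  have hpTc : Continuous (pT z) := (pT_contDiff z hz).continuous
  have hpXTc : Continuous (pXT z) := papply2_cont _ (pX_contDiff z hz) _
  have hpTTc : Continuous (pTT z) := papply2_cont _ (pT_contDiff z hz) _
  have hGc : Continuous (fun q : ℝ × ℝ => 2 * pX z q * pXT z q + 2 * pT z q * pTT z q) :=
    ((continuous_const.mul hpXc).mul hpXTc).add ((continuous_const.mul hpTc).mul hpTTc)
  obtain ⟨C, hC⟩ := ((isCompact_Icc (a := (0:ℝ)) (b := 1)).prod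
      (isCompact_Icc (a := t1 - 1) (b := t1 + 1))).exists_bound_of_continuousOn
      hGc.continuousOn
  have hsec : ∀ s : ℝ, Continuous (fun ξ => (pX z (ξ, s))^2 + (pT z (ξ, s))^2) := by
    intro s
    exact ((hpXc.comp (continuous_id.prodMk continuous_const)).pow 2).add
      ((hpTc.comp (continuous_id.prodMk continuous_const)).pow 2)
  have hGsec : ∀ s : ℝ, Continuous
      (fun ξ => 2 * pX z (ξ, s) * pXT z (ξ, s) + 2 * pT z (ξ, s) * pTT z (ξ, s)) := by
    intro s
    exact hGc.comp (continuous_id.prodMk continuous_const)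
  have := (intervalIntegral.hasDerivAt_integral_of_dominated_loc_of_deriv_le
    (F := fun s ξ => (pX z (ξ, s))^2 + (pT z (ξ, s))^2)
    (F' := fun s ξ => 2 * pX z (ξ, s) * pXT z (ξ, s) + 2 * pT z (ξ, s) * pTT z (ξ, s))
    (x₀ := t1) (a := 0) (b := 1) (μ := volume) (bound := fun _ => C) (s := Metric.ball t1 1)
    (Metric.ball_mem_nhds t1 one_pos)
    (Filter.Eventually.of_forall fun s => ((hsec s).aestronglyMeasurable))
    ((hsec t1).intervalIntegrable _ _)
    ((hGsec t1).aestronglyMeasurable)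
    (Filter.Eventually.of_forall ?_)
    (intervalIntegrable_const)
    (Filter.Eventually.of_forall ?_)).2
  · exact this
  · intro ξ hξ s hs
    apply hC
    constructor
    · rcases Set.uIoc_of_le (zero_le_one (α := ℝ)) ▸ hξ with ⟨h1, h2⟩
      exact ⟨le_of_lt h1, h2⟩
    · have := Metric.mem_ball.mp hs
      rw [Real.dist_eq, abs_sub_lt_iff] at this
      constructor <;> linarith [this.1, this.2]
  · intro ξ _ s _
    have hd1 := pX_sectT z hz ξ s
    have hd2 := pT_sectT z hz ξ s
    have := (hd1.pow 2).add (hd2.pow 2)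
    exact this.congr_deriv (by simp only [Nat.reduceSub, Nat.cast_ofNat, pow_one])

end main

set_option maxHeartbeats 1000000 in
/-- **Pointwise bound (inequality (41)).** Under the hypotheses of Proposition 1,
for every `t ≥ t₀` and `x ∈ [0,1]`,
`z(x,t)² ≤ e^{(2g₁/π)(t−t₀)} ∫₀¹ (z_x(ξ,t₀)² + z_t(ξ,t₀)²) dξ`. -/
theorem pointwise_bound_1d (g1 t0 : ℝ) (hg1 : 0 < g1)
    (f : ℝ → ℝ → ℝ → ℝ)
    (hf : ContDiff ℝ 1 fun q : ℝ × ℝ × ℝ => f q.1 q.2.1 q.2.2)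
    (hf0 : ∀ x ∈ Set.Icc (0:ℝ) 1, ∀ t : ℝ, f 0 x t = 0)
    (hfz : ∀ z : ℝ, ∀ x ∈ Set.Icc (0:ℝ) 1, ∀ t : ℝ, |deriv (fun y => f y x t) z| ≤ g1)
    (z : ℝ → ℝ → ℝ)
    (hz : ContDiff ℝ 2 fun q : ℝ × ℝ => z q.1 q.2)
    (hwave : ∀ x ∈ Set.Icc (0:ℝ) 1, ∀ t, t0 ≤ t →
      deriv (deriv fun s => z x s) t = deriv (deriv fun y => z y t) x + f (z x t) x t)
    (hbc0 : ∀ t, t0 ≤ t → z 0 t = 0)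
    (hbc1 : ∀ t, t0 ≤ t → deriv (fun y => z y t) 1 = 0) :
    ∀ t, t0 ≤ t → ∀ x ∈ Set.Icc (0:ℝ) 1,
      (z x t) ^ 2 ≤ Real.exp ((2 * g1 / π) * (t - t0)) *
        ∫ ξ in Set.Icc (0:ℝ) 1,
          ((deriv (fun y => z y t0) ξ) ^ 2 + (deriv (fun s => z ξ s) t0) ^ 2) := by
  intro t ht x hx
  have hπ := Real.pi_pos
  have hpXc : Continuous (pX z) := (pX_contDiff z hz).continuous
  have hpTc : Continuous (pT z) := (pT_contDiff z hz).continuous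
  have hzc : Continuous (fun q : ℝ × ℝ => z q.1 q.2) := hz.continuous
  have hsecX : ∀ s : ℝ, Continuous (fun ξ => pX z (ξ, s)) :=
    fun s => hpXc.comp (continuous_id.prodMk continuous_const)
  have hsecT : ∀ s : ℝ, Continuous (fun ξ => pT z (ξ, s)) :=
    fun s => hpTc.comp (continuous_id.prodMk continuous_const)
  have hsecZ : ∀ s : ℝ, Continuous (fun ξ => z ξ s) :=
    fun s => hzc.comp (continuous_id.prodMk continuous_const)
  have hsecTX : ∀ s : ℝ, Continuous (fun ξ => pTX z (ξ, s)) := fun s =>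
    (papply2_cont _ (pT_contDiff z hz) _).comp (continuous_id.prodMk continuous_const)
  have hsecXX : ∀ s : ℝ, Continuous (fun ξ => pXX z (ξ, s)) := fun s =>
    (papply2_cont _ (pX_contDiff z hz) _).comp (continuous_id.prodMk continuous_const)
  have hsecXT : ∀ s : ℝ, Continuous (fun ξ => pXT z (ξ, s)) := fun s =>
    (papply2_cont _ (pX_contDiff z hz) _).comp (continuous_id.prodMk continuous_const)
  have hsecF : ∀ s : ℝ, Continuous (fun ξ => f (z ξ s) ξ s) := by
    intro s
    have h1 : Continuous (fun ξ : ℝ => ((z ξ s : ℝ), (ξ, s))) :=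
      (hsecZ s).prodMk (continuous_id.prodMk continuous_const)
    exact hf.continuous.comp h1
  set En : ℝ → ℝ := fun s => ∫ ξ in (0:ℝ)..1, ((pX z (ξ, s))^2 + (pT z (ξ, s))^2) with hEn
  set D : ℝ → ℝ := fun s => ∫ ξ in (0:ℝ)..1,
    (2 * pX z (ξ, s) * pXT z (ξ, s) + 2 * pT z (ξ, s) * pTT z (ξ, s)) with hDdef
  have hEnD : ∀ s, HasDerivAt En (D s) s := fun s => En_hasDerivAt z hz s
  have hEnn : ∀ s, 0 ≤ En s := fun s =>
    intervalIntegral.integral_nonneg zero_le_one (fun ξ _ => by positivity)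
  have hEnsplit : ∀ s, En s = (∫ ξ in (0:ℝ)..1, (pX z (ξ, s))^2)
      + (∫ ξ in (0:ℝ)..1, (pT z (ξ, s))^2) := fun s =>
    intervalIntegral.integral_add (((hsecX s).pow 2).intervalIntegrable _ _)
      (((hsecT s).pow 2).intervalIntegrable _ _)
  -- boundary conditions in terms of pX, pT
  have hbX : ∀ s, t0 ≤ s → pX z (1, s) = 0 := by
    intro s hs
    rw [← deriv_sectX z hz 1 s]
    exact hbc1 s hs
  have hbT : ∀ s, t0 ≤ s → pT z (0, s) = 0 := by
    intro s hs
    have h1 : HasDerivWithinAt (fun r => z 0 r) (pT z (0, s)) (Set.Ici s) s :=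
      (z_sectT z hz 0 s).hasDerivWithinAt
    have h2 : HasDerivWithinAt (fun _ : ℝ => (0:ℝ)) (pT z (0, s)) (Set.Ici s) s := by
      apply h1.congr_of_eventuallyEq ?_ (hbc0 s hs).symm
      filter_upwards [self_mem_nhdsWithin] with r hr
      exact (hbc0 r (hs.trans hr)).symm
    have h3 := h2.derivWithin (uniqueDiffOn_Ici s s Set.self_mem_Ici)
    have h4 := (hasDerivWithinAt_const s (Set.Ici s) (0:ℝ)).derivWithin
      (uniqueDiffOn_Ici s s Set.self_mem_Ici)
    exact h3.symm.trans h4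
  -- wave equation in terms of partials
  have hwv : ∀ x' ∈ Set.Icc (0:ℝ) 1, ∀ s, t0 ≤ s →
      pTT z (x', s) = pXX z (x', s) + f (z x' s) x' s := by
    intro x' hx' s hs
    have h := hwave x' hx' s hs
    have e1 : deriv (fun r => z x' r) = fun r => pT z (x', r) :=
      funext fun r => deriv_sectT z hz x' r
    have e2 : deriv (fun y => z y s) = fun y => pX z (y, s) :=
      funext fun y => deriv_sectX z hz y s
    rw [e1, e2, (pT_sectT z hz x' s).deriv, (pX_sectX z hz x' s).deriv] at h
    exact h
  -- bound on f via MVT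
  have hfb : ∀ x' ∈ Set.Icc (0:ℝ) 1, ∀ s a : ℝ, |f a x' s| ≤ g1 * |a| := by
    intro x' hx' s a
    have hd : ∀ y : ℝ, DifferentiableAt ℝ (fun y => f y x' s) y := by
      intro y
      have h1 : ContDiff ℝ 1 (fun y => f y x' s) :=
        hf.comp ((contDiff_id : ContDiff ℝ 1 (fun y : ℝ => y)).prodMk
          (contDiff_const (c := ((x', s) : ℝ × ℝ))))
      exact h1.differentiable one_ne_zero y
    have h2 := Convex.norm_image_sub_le_of_norm_deriv_le (f := fun y => f y x' s)
      (fun y _ => hd y) (fun y _ => by simpa using hfz y x' hx' s)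
      convex_univ (Set.mem_univ 0) (Set.mem_univ a)
    simpa [hf0 x' hx' s, Real.norm_eq_abs] using h2
  -- derivative bound
  have hDb : ∀ s, t0 ≤ s → |D s| ≤ (2 * g1 / π) * En s := by
    intro s hs
    -- rewrite D s using the wave equation and integrate by parts
    have hIBP : ∫ ξ in (0:ℝ)..1, (2 * pT z (ξ, s) * pXX z (ξ, s))
        = - ∫ ξ in (0:ℝ)..1, (2 * pTX z (ξ, s) * pX z (ξ, s)) := by
      have h := intervalIntegral.integral_mul_deriv_eq_deriv_mul_of_hasDerivAt
        (a := (0:ℝ)) (b := 1)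
        (u := fun ξ => 2 * pT z (ξ, s)) (v := fun ξ => pX z (ξ, s))
        (u' := fun ξ => 2 * pTX z (ξ, s)) (v' := fun ξ => pXX z (ξ, s))
        ((continuous_const.mul (hsecT s)).continuousOn) ((hsecX s).continuousOn)
        (fun ξ _ => by simpa using ((pT_sectX z hz ξ s).const_mul 2))
        (fun ξ _ => pX_sectX z hz ξ s)
        ((continuous_const.mul (hsecTX s)).intervalIntegrable _ _)
        ((hsecXX s).intervalIntegrable _ _)
      simp only [hbX s hs, hbT s hs, mul_zero, zero_mul, sub_zero, zero_sub] at h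
      exact h
    have hDs : D s = ∫ ξ in (0:ℝ)..1, (2 * pT z (ξ, s) * f (z ξ s) ξ s) := by
      show (∫ ξ in (0:ℝ)..1,
        (2 * pX z (ξ, s) * pXT z (ξ, s) + 2 * pT z (ξ, s) * pTT z (ξ, s))) = _
      have hcongr : ∀ ξ ∈ Set.uIcc (0:ℝ) 1,
          2 * pX z (ξ, s) * pXT z (ξ, s) + 2 * pT z (ξ, s) * pTT z (ξ, s)
          = (2 * pX z (ξ, s) * pXT z (ξ, s) + 2 * pT z (ξ, s) * pXX z (ξ, s))
            + 2 * pT z (ξ, s) * f (z ξ s) ξ s := by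
        intro ξ hξ
        rw [Set.uIcc_of_le zero_le_one] at hξ
        rw [hwv ξ hξ s hs]
        ring
      rw [intervalIntegral.integral_congr hcongr]
      rw [intervalIntegral.integral_add, intervalIntegral.integral_add]
      · have e : ∫ ξ in (0:ℝ)..1, (2 * pTX z (ξ, s) * pX z (ξ, s))
            = ∫ ξ in (0:ℝ)..1, (2 * pX z (ξ, s) * pXT z (ξ, s)) := by
          apply intervalIntegral.integral_congr
          intro ξ _
          rw [pXT_eq_pTX z hz]
          ring
        rw [hIBP, e]
        ring
      · exact (((continuous_const.mul (hsecX s)).mul (hsecXT s))).intervalIntegrable _ _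
      · exact (((continuous_const.mul (hsecT s)).mul (hsecXX s))).intervalIntegrable _ _
      · exact ((((continuous_const.mul (hsecX s)).mul (hsecXT s))).add
          (((continuous_const.mul (hsecT s)).mul (hsecXX s)))).intervalIntegrable _ _
      · exact (((continuous_const.mul (hsecT s)).mul (hsecF s))).intervalIntegrable _ _
    -- pointwise bound
    have hptw : ∀ ξ ∈ Set.Icc (0:ℝ) 1, |2 * pT z (ξ, s) * f (z ξ s) ξ s|
        ≤ g1 * (2/π) * (pT z (ξ, s))^2 + g1 * (π/2) * (z ξ s)^2 := by
      intro ξ hξ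
      have h1 := hfb ξ hξ s (z ξ s)
      set a := |pT z (ξ, s)| with ha
      set b := |z ξ s| with hb
      have key : (2/π) * (pT z (ξ, s))^2 + (π/2) * (z ξ s)^2 - 2 * (a * b)
          = (2 * a - π * b)^2 / (2 * π) := by
        rw [← sq_abs (pT z (ξ, s)), ← sq_abs (z ξ s), ← ha, ← hb]
        field_simp
        ring
      have hkey : 2 * (a * b) ≤ (2/π) * (pT z (ξ, s))^2 + (π/2) * (z ξ s)^2 := by
        nlinarith [div_nonneg (sq_nonneg (2 * a - π * b)) (by positivity : (0:ℝ) ≤ 2 * π)]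
      have habs : |2 * pT z (ξ, s) * f (z ξ s) ξ s| ≤ 2 * a * (g1 * b) := by
        rw [abs_mul, abs_mul, abs_two]
        have := mul_le_mul_of_nonneg_left h1 (by positivity : (0:ℝ) ≤ 2 * a)
        calc 2 * a * |f (z ξ s) ξ s| = 2 * a * |f (z ξ s) ξ s| := rfl
          _ ≤ 2 * a * (g1 * b) := by
              apply mul_le_mul_of_nonneg_left _ (by positivity : (0:ℝ) ≤ 2 * a)
              exact h1
      calc |2 * pT z (ξ, s) * f (z ξ s) ξ s| ≤ 2 * a * (g1 * b) := habs
        _ = g1 * (2 * (a * b)) := by ring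
        _ ≤ g1 * ((2/π) * (pT z (ξ, s))^2 + (π/2) * (z ξ s)^2) :=
            mul_le_mul_of_nonneg_left hkey hg1.le
        _ = g1 * (2/π) * (pT z (ξ, s))^2 + g1 * (π/2) * (z ξ s)^2 := by ring
    -- Wirtinger for w = z(·,s)
    have hwC : ContDiff ℝ 1 (fun ξ => z ξ s) :=
      (hz.of_le one_le_two).comp (contDiff_id.prodMk contDiff_const)
    have hw0 : z 0 s = 0 := hbc0 s hs
    have hwderiv : deriv (fun ξ => z ξ s) = fun ξ => pX z (ξ, s) :=
      funext fun ξ => deriv_sectX z hz ξ s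
    have hwir : (π/2)^2 * ∫ ξ in (0:ℝ)..1, (z ξ s)^2
        ≤ ∫ ξ in (0:ℝ)..1, (pX z (ξ, s))^2 := by
      have := wirtinger (fun ξ => z ξ s) hwC hw0
      rwa [hwderiv] at this
    -- combine
    set IX := ∫ ξ in (0:ℝ)..1, (pX z (ξ, s))^2 with hIX
    set IT := ∫ ξ in (0:ℝ)..1, (pT z (ξ, s))^2 with hIT
    set IZ := ∫ ξ in (0:ℝ)..1, (z ξ s)^2 with hIZ
    have hIZn : 0 ≤ IZ :=
      intervalIntegral.integral_nonneg zero_le_one (fun ξ _ => sq_nonneg _)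
    have hDab : |D s| ≤ g1 * (2/π) * IT + g1 * (π/2) * IZ := by
      rw [hDs]
      calc |∫ ξ in (0:ℝ)..1, (2 * pT z (ξ, s) * f (z ξ s) ξ s)|
          ≤ ∫ ξ in (0:ℝ)..1, |2 * pT z (ξ, s) * f (z ξ s) ξ s| :=
            intervalIntegral.abs_integral_le_integral_abs zero_le_one
        _ ≤ ∫ ξ in (0:ℝ)..1, (g1 * (2/π) * (pT z (ξ, s))^2 + g1 * (π/2) * (z ξ s)^2) := by
            apply intervalIntegral.integral_mono_on zero_le_one
            · exact (((continuous_const.mul (hsecT s)).mul (hsecF s)).abs).intervalIntegrable _ _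
            · exact ((continuous_const.mul ((hsecT s).pow 2)).add
                (continuous_const.mul ((hsecZ s).pow 2))).intervalIntegrable _ _
            · exact hptw
        _ = g1 * (2/π) * IT + g1 * (π/2) * IZ := by
            rw [intervalIntegral.integral_add (f := fun ξ => g1 * (2/π) * (pT z (ξ, s))^2)
              (g := fun ξ => g1 * (π/2) * (z ξ s)^2)
              ((continuous_const.mul ((hsecT s).pow 2)).intervalIntegrable _ _)
              ((continuous_const.mul ((hsecZ s).pow 2)).intervalIntegrable _ _),
              intervalIntegral.integral_const_mul, intervalIntegral.integral_const_mul]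
    have hfinal : g1 * (2/π) * IT + g1 * (π/2) * IZ ≤ 2 * g1 / π * (IX + IT) := by
      rw [← mul_le_mul_iff_left₀ hπ]
      have e1 : (g1 * (2/π) * IT + g1 * (π/2) * IZ) * π
          = 2 * g1 * IT + g1 * (π^2/2) * IZ := by
        field_simp
      have e2 : (2 * g1 / π * (IX + IT)) * π = 2 * g1 * IX + 2 * g1 * IT := by
        field_simp
      rw [e1, e2]
      nlinarith [mul_le_mul_of_nonneg_left hwir (by positivity : (0:ℝ) ≤ 2 * g1)]
    rw [hEnsplit s]
    exact hDab.trans hfinal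
  -- Gronwall
  have hgron : En t ≤ En t0 * Real.exp ((2 * g1 / π) * (t - t0)) := by
    have hcont : ContinuousOn En (Set.Icc t0 t) :=
      fun s _ => (hEnD s).continuousAt.continuousWithinAt
    have hderiv : ∀ s ∈ Set.Ico t0 t, HasDerivWithinAt En (D s) (Set.Ici s) s :=
      fun s _ => (hEnD s).hasDerivWithinAt
    have hbound : ∀ s ∈ Set.Ico t0 t, ‖D s‖ ≤ (2 * g1 / π) * ‖En s‖ + 0 := by
      intro s hs
      rw [Real.norm_eq_abs, Real.norm_eq_abs, abs_of_nonneg (hEnn s), add_zero]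
      exact hDb s hs.1
    have h := norm_le_gronwallBound_of_norm_deriv_right_le hcont hderiv
      (le_of_eq (Real.norm_of_nonneg (hEnn t0))) hbound t ⟨ht, le_rfl⟩
    rw [gronwallBound_ε0, Real.norm_of_nonneg (hEnn t)] at h
    exact h
  -- Sobolev at time t
  have hFTC : ∫ ξ in (0:ℝ)..x, pX z (ξ, t) = z x t - z 0 t :=
    intervalIntegral.integral_eq_sub_of_hasDerivAt (fun ξ _ => z_sectX z hz ξ t)
      ((hsecX t).intervalIntegrable _ _)
  have habs : |z x t| ≤ ∫ ξ in (0:ℝ)..1, |pX z (ξ, t)| := by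
    have h1 : z x t = ∫ ξ in (0:ℝ)..x, pX z (ξ, t) := by
      rw [hFTC, hbc0 t ht, sub_zero]
    rw [h1]
    calc |∫ ξ in (0:ℝ)..x, pX z (ξ, t)| ≤ ∫ ξ in (0:ℝ)..x, |pX z (ξ, t)| :=
          intervalIntegral.abs_integral_le_integral_abs hx.1
      _ ≤ ∫ ξ in (0:ℝ)..1, |pX z (ξ, t)| := by
          apply intervalIntegral.integral_mono_interval le_rfl hx.1 hx.2
          · exact Filter.Eventually.of_forall (fun ξ => abs_nonneg _)
          · exact ((hsecX t).abs).intervalIntegrable _ _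
  have hsob : (z x t)^2 ≤ ∫ ξ in (0:ℝ)..1, (pX z (ξ, t))^2 := by
    have h1 := variance_ineq (fun ξ => |pX z (ξ, t)|) ((hsecX t).abs)
    have h2 : (∫ ξ in (0:ℝ)..1, |pX z (ξ, t)|^2) = ∫ ξ in (0:ℝ)..1, (pX z (ξ, t))^2 := by
      apply intervalIntegral.integral_congr
      intro ξ _
      simp only [sq_abs]
    have h3 : (z x t)^2 ≤ (∫ ξ in (0:ℝ)..1, |pX z (ξ, t)|)^2 := by
      rw [← sq_abs (z x t)]
      apply pow_le_pow_left₀ (abs_nonneg _) habs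
    calc (z x t)^2 ≤ (∫ ξ in (0:ℝ)..1, |pX z (ξ, t)|)^2 := h3
      _ ≤ ∫ ξ in (0:ℝ)..1, |pX z (ξ, t)|^2 := h1
      _ = ∫ ξ in (0:ℝ)..1, (pX z (ξ, t))^2 := h2
  -- identify the RHS integral with En t0
  have hrhs : (∫ ξ in Set.Icc (0:ℝ) 1,
      ((deriv (fun y => z y t0) ξ)^2 + (deriv (fun s => z ξ s) t0)^2)) = En t0 := by
    rw [MeasureTheory.integral_Icc_eq_integral_Ioc,
      ← intervalIntegral.integral_of_le zero_le_one, hEn]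
    apply intervalIntegral.integral_congr
    intro ξ _
    show (deriv (fun y => z y t0) ξ)^2 + (deriv (fun s => z ξ s) t0)^2
      = (pX z (ξ, t0))^2 + (pT z (ξ, t0))^2
    rw [deriv_sectX z hz ξ t0, deriv_sectT z hz ξ t0]
  rw [hrhs]
  have hXT : (∫ ξ in (0:ℝ)..1, (pX z (ξ, t))^2) ≤ En t := by
    rw [hEnsplit t]
    have : 0 ≤ ∫ ξ in (0:ℝ)..1, (pT z (ξ, t))^2 :=
      intervalIntegral.integral_nonneg zero_le_one (fun ξ _ => sq_nonneg _)
    linarith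
  calc (z x t)^2 ≤ ∫ ξ in (0:ℝ)..1, (pX z (ξ, t))^2 := hsob
    _ ≤ En t := hXT
    _ ≤ En t0 * Real.exp ((2 * g1 / π) * (t - t0)) := hgron
    _ = Real.exp ((2 * g1 / π) * (t - t0)) * En t0 := mul_comm _ _
end

section
/- Let n ≥ 1, χ > 0, δ > 0, T* > 0, k > 0, and set σ = e^{−2δT*}. Suppose there exists λ₂ > 0 such that the symmetric 3×3 matrix Φ with rows (−½(1−σ) + 4λ₂/(π²n), √n(1+σ)χ, 0), (√n(1+σ)χ, −½(1−σ), (n−1)(1+σ)χ/2), (0, (n−1)(1+σ)χ/2, −λ₂) is negative definite. Then there exists λ₀ > 0 such that the symmetric 3×3 matrix Φ₀ with rows (½ − 4λ₀/(π²n), √n·χ, 0), (√n·χ, ½, (n−1)χ/2), (0, (n−1)χ/2, λ₀) is positive definite. -/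
open MeasureTheory Real Matrix

noncomputable section

/-- The closed unit hypercube `[0,1]^n`. -/
def cube (n : ℕ) : Set (Fin n → ℝ) := Set.univ.pi fun _ => Set.Icc (0:ℝ) 1

/-- Partial derivative of `u` in the `p`-th coordinate direction. -/
def pd {n : ℕ} (p : Fin n) (u : (Fin n → ℝ) → ℝ) (x : Fin n → ℝ) : ℝ :=
  fderiv ℝ u x (Pi.single p 1)

/-- Squared Euclidean norm of the gradient, `|∇u|²`. -/
def gradSq {n : ℕ} (u : (Fin n → ℝ) → ℝ) (x : Fin n → ℝ) : ℝ := ∑ p, (pd p u x) ^ 2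

/-- Laplacian `Δu = Σ_p u_{x_p x_p}`. -/
def lap {n : ℕ} (u : (Fin n → ℝ) → ℝ) (x : Fin n → ℝ) : ℝ := ∑ p, pd p (pd p u) x

/-- Surface integral over `Γ_N`: `Σ_p ∫_{[0,1]^{n-1}} h|_{x_p = 1} dx'`
(each face integral realized as an integral over the cube of a function
independent of the `p`-th coordinate). -/
def faceInt {n : ℕ} (h : (Fin n → ℝ) → ℝ) : ℝ :=
  ∑ p : Fin n, ∫ x in cube n, h (Function.update x p 1)

/-- `xᵀ∇u`. -/
def xGrad {n : ℕ} (u : (Fin n → ℝ) → ℝ) (x : Fin n → ℝ) : ℝ := ∑ p, x p * pd p u x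

/-- Minimal eigenvalue of a symmetric matrix, via the Rayleigh quotient. -/
def lamMin (M : Matrix (Fin 3) (Fin 3) ℝ) : ℝ :=
  sInf {r | ∃ v : Fin 3 → ℝ, (∑ i, (v i) ^ 2) = 1 ∧ r = v ⬝ᵥ M.mulVec v}

/-- Maximal eigenvalue of a symmetric matrix, via the Rayleigh quotient. -/
def lamMax (M : Matrix (Fin 3) (Fin 3) ℝ) : ℝ :=
  sSup {r | ∃ v : Fin 3 → ℝ, (∑ i, (v i) ^ 2) = 1 ∧ r = v ⬝ᵥ M.mulVec v}

/-- Negative definiteness. -/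
def NegDefM {m : ℕ} (M : Matrix (Fin m) (Fin m) ℝ) : Prop := (-M).PosDef

/-- Negative semidefiniteness. -/
def NegSemidefM {m : ℕ} (M : Matrix (Fin m) (Fin m) ℝ) : Prop := (-M).PosSemidef

/-- The matrix `Φ₀` of LMI (12). -/
def Phi0 (n : ℕ) (χ lam0 : ℝ) : Matrix (Fin 3) (Fin 3) ℝ :=
  !![1/2 - 4*lam0/(π^2*n), Real.sqrt n * χ, 0;
     Real.sqrt n * χ, 1/2, ((n:ℝ)-1)*χ/2;
     0, ((n:ℝ)-1)*χ/2, lam0]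

/-- `Φ₁ = Φ₀ + diag(4λ₀/(π²n), 0, 0)`. -/
def Phi1 (n : ℕ) (χ lam0 : ℝ) : Matrix (Fin 3) (Fin 3) ℝ :=
  Phi0 n χ lam0 + Matrix.diagonal ![4*lam0/(π^2*n), 0, 0]

/-- The matrix `Ψ₂` of LMI (14). -/
def Psi2 (n : ℕ) (k χ δ g1 lam1 : ℝ) : Matrix (Fin 3) (Fin 3) ℝ :=
  !![-χ + δ*(1 + χ*k*((n:ℝ)-1)) + 4*lam1/(π^2*n), 2*δ*Real.sqrt n*χ, Real.sqrt n*g1*χ;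
     2*δ*Real.sqrt n*χ, -χ + δ, g1/2 + δ*((n:ℝ)-1)*χ;
     Real.sqrt n*g1*χ, g1/2 + δ*((n:ℝ)-1)*χ, -lam1 + g1*((n:ℝ)-1)*χ]

/-- The matrix `Φ` of the exact-observability LMI (32), with `σ = e^{-2δT*}`. -/
def PhiM (n : ℕ) (χ σ lam2 : ℝ) : Matrix (Fin 3) (Fin 3) ℝ :=
  !![-(1-σ)/2 + 4*lam2/(π^2*n), Real.sqrt n*(1+σ)*χ, 0;
     Real.sqrt n*(1+σ)*χ, -(1-σ)/2, ((n:ℝ)-1)*(1+σ)*χ/2;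
     0, ((n:ℝ)-1)*(1+σ)*χ/2, -lam2]

/-- `α = 2λ_min(Φ₀)`. -/
def alphaC (n : ℕ) (χ lam0 : ℝ) : ℝ := 2 * lamMin (Phi0 n χ lam0)

/-- `β = 2(1 + 4/(π²n))λ_max(Φ₁) + χk(n−1)`. -/
def betaC (n : ℕ) (k χ lam0 : ℝ) : ℝ :=
  2 * (1 + 4/(π^2*n)) * lamMax (Phi1 n χ lam0) + χ*k*((n:ℝ)-1)


lemma quadPhi0 (n : ℕ) (χ l : ℝ) (x : Fin 3 → ℝ) :
    x ⬝ᵥ (Phi0 n χ l) *ᵥ x =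
      (1/2 - 4*l/(π^2*n))*(x 0)^2 + 1/2*(x 1)^2 + l*(x 2)^2
        + 2*(Real.sqrt n * χ)*(x 0)*(x 1) + ((n:ℝ)-1)*χ*(x 1)*(x 2) := by
  simp [Phi0, Matrix.mulVec, dotProduct, Fin.sum_univ_three]
  ring

lemma quadPhiM (n : ℕ) (χ σ l : ℝ) (x : Fin 3 → ℝ) :
    x ⬝ᵥ (-(PhiM n χ σ l)) *ᵥ x =
      ((1-σ)/2 - 4*l/(π^2*n))*(x 0)^2 + (1-σ)/2*(x 1)^2 + l*(x 2)^2
        - 2*(Real.sqrt n*(1+σ)*χ)*(x 0)*(x 1) - ((n:ℝ)-1)*(1+σ)*χ*(x 1)*(x 2) := by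
  simp [PhiM, Matrix.mulVec, dotProduct, Fin.sum_univ_three]
  ring

set_option maxHeartbeats 1000000 in
/-- **Feasibility implication (proof of Theorem 2):** feasibility of the
exact-observability LMI `Φ < 0` (for some `λ₂ > 0`, with `σ = e^{−2δT*}`)
yields feasibility of the Lyapunov-positivity LMI `Φ₀ > 0` (for some `λ₀ > 0`). -/
theorem Phi_feasible_implies_Phi0 (n : ℕ) (hn : 1 ≤ n) (χ δ Tstar k : ℝ)
    (hχ : 0 < χ) (hδ : 0 < δ) (hTs : 0 < Tstar) (hk : 0 < k)
    (h : ∃ lam2 > 0, NegDefM (PhiM n χ (Real.exp (-2 * δ * Tstar)) lam2)) :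
    ∃ lam0 > 0, (Phi0 n χ lam0).PosDef := by
  obtain ⟨l, hl, hPD⟩ := h
  obtain ⟨hherm, hq⟩ := Matrix.posDef_iff_dotProduct_mulVec.mp hPD
  set σ := Real.exp (-2 * δ * Tstar) with hσdef
  have hσ0 : 0 < σ := Real.exp_pos _
  have hσ1 : σ < 1 := by
    rw [hσdef, ← Real.exp_zero]
    apply Real.exp_lt_exp.mpr
    nlinarith
  refine ⟨l, hl, Matrix.posDef_iff_dotProduct_mulVec.mpr ⟨?_, ?_⟩⟩
  · unfold Matrix.IsHermitian
    ext i j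
    fin_cases i <;> fin_cases j <;> simp [Phi0]
  · intro x hx
    set a := x 0; set b := x 1; set c := x 2
    set ε₁ : ℝ := if 0 ≤ a * b then 1 else -1 with hε₁
    set ε₂ : ℝ := if 0 ≤ b * c then 1 else -1 with hε₂
    have hε₁ne : ε₁ ≠ 0 := by rw [hε₁]; split <;> norm_num
    have hε₂ne : ε₂ ≠ 0 := by rw [hε₂]; split <;> norm_num
    have hε₁sq : ε₁^2 = 1 := by rw [hε₁]; split <;> norm_num
    have hε₂sq : ε₂^2 = 1 := by rw [hε₂]; split <;> norm_num
    have habs1 : ε₁ * (a*b) = |a*b| := by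
      rw [hε₁]; rcases le_or_gt 0 (a*b) with h'|h'
      · rw [if_pos h', abs_of_nonneg h']; ring
      · rw [if_neg (not_le.mpr h'), abs_of_neg h']; ring
    have habs2 : ε₂ * (b*c) = |b*c| := by
      rw [hε₂]; rcases le_or_gt 0 (b*c) with h'|h'
      · rw [if_pos h', abs_of_nonneg h']; ring
      · rw [if_neg (not_le.mpr h'), abs_of_neg h']; ring
    set w : Fin 3 → ℝ := ![ε₁ * a, b, ε₂ * c] with hw
    have hwne : w ≠ 0 := by
      intro h0
      apply hx
      funext i
      have h0' : ∀ i, w i = 0 := fun i => congrFun h0 i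
      have ha : a = 0 := by
        have := h0' 0; simp [hw] at this
        rcases this with h'|h' ; exact absurd h' hε₁ne ; exact h'
      have hb : b = 0 := by have := h0' 1; simpa [hw] using this
      have hc : c = 0 := by
        have := h0' 2; simp [hw] at this
        rcases this with h'|h' ; exact absurd h' hε₂ne ; exact h'
      fin_cases i <;> simpa
    have hQ := hq (x := w) hwne
    rw [show star w = w from rfl, quadPhiM] at hQ
    have hw0 : w 0 = ε₁ * a := rfl
    have hw1 : w 1 = b := rfl
    have hw2 : w 2 = ε₂ * c := rfl
    rw [hw0, hw1, hw2] at hQ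
    rw [show star x = x from rfl, quadPhi0]
    have hsn : 0 ≤ Real.sqrt n := Real.sqrt_nonneg _
    have hn1 : 0 ≤ (n:ℝ) - 1 := by
      have : (1:ℝ) ≤ (n:ℝ) := by exact_mod_cast hn
      linarith
    have hab : a * b ≥ -|a*b| := neg_abs_le _
    have hbc : b * c ≥ -|b*c| := neg_abs_le _
    have habsnn : 0 ≤ |a*b| := abs_nonneg _
    have hbcnn : 0 ≤ |b*c| := abs_nonneg _
    -- rewrite hQ using ε properties
    rw [mul_pow, mul_pow, hε₁sq, hε₂sq, one_mul, one_mul] at hQ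
    have e1 : 2*(Real.sqrt n*(1+σ)*χ)*(ε₁*a)*b = 2*(Real.sqrt n*(1+σ)*χ)*|a*b| := by
      rw [← habs1]; ring
    have e2 : ((n:ℝ)-1)*(1+σ)*χ*b*(ε₂*c) = ((n:ℝ)-1)*(1+σ)*χ*|b*c| := by
      rw [← habs2]; ring
    rw [e1, e2] at hQ
    have key1 : 2*(Real.sqrt n * χ)*(a*b) + 2*(Real.sqrt n*(1+σ)*χ)*|a*b| ≥ 0 := by
      nlinarith [mul_nonneg (mul_nonneg hsn hχ.le) (show 0 ≤ |a*b| + a*b by linarith),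
        mul_nonneg (mul_nonneg (mul_nonneg hσ0.le hsn) hχ.le) habsnn]
    have key2 : ((n:ℝ)-1)*χ*(b*c) + ((n:ℝ)-1)*(1+σ)*χ*|b*c| ≥ 0 := by
      nlinarith [mul_nonneg (mul_nonneg hn1 hχ.le) (show 0 ≤ |b*c| + b*c by linarith),
        mul_nonneg (mul_nonneg (mul_nonneg hσ0.le hn1) hχ.le) hbcnn]
    nlinarith [hQ, key1, key2, mul_nonneg hσ0.le (sq_nonneg a), mul_nonneg hσ0.le (sq_nonneg b)]
end
end

section
/- Let n ≥ 1, k > 0, χ > 0, δ > 0, T* > 0, λ₂ > 0, and set σ = e^{−2δT*}. Suppose the symmetric 3×3 matrix Φ is negative definite. Then for every continuously differentiable e : [0,1]^n → ℝ vanishing on Γ_D and every continuous v : [0,1]^n → ℝ, the two functionals V^± = ½∫_Ω (|∇e|² + v²) dx ± χ∫_Ω [2(xᵀ∇e) + (n−1)e] v dx + (χk(n−1)/2)∫_{Γ_N} e² dΓ satisfy e^{−2δT*} V^− ≤ V^+ and e^{−2δT*} V^+ ≤ V^−. -/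
open MeasureTheory Real Matrix

noncomputable section

section WirtingerHelpers
open Set ENNReal intervalIntegral

lemma eps_limit {a b K : ℝ} (hK : 0 ≤ K) (h : ∀ ε : ℝ, 0 < ε → ε < 1 → a ≤ b + ε * K) : a ≤ b := by
  by_contra hc
  push_neg at hc
  have hab : 0 < a - b := by linarith
  set ε := min (1/2) ((a - b) / (2 * (K + 1))) with hε
  have hε1 : ε ≤ 1/2 := min_le_left _ _
  have hεpos : 0 < ε := lt_min (by norm_num) (by positivity)
  have h2 : ε ≤ (a - b) / (2 * (K + 1)) := min_le_right _ _
  have h3 := h ε hεpos (by linarith)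
  have hKle : ε * K ≤ (a - b) / (2 * (K + 1)) * (K + 1) :=
    mul_le_mul h2 (by linarith) hK (by positivity)
  have h4 : (a - b) / (2 * (K + 1)) * (K + 1) = (a - b) / 2 := by
    field_simp
  nlinarith

/-- 1-D Wirtinger inequality with Dirichlet condition at 0. -/
lemma wirtinger1 (f g : ℝ → ℝ) (hf : ∀ t, HasDerivAt f (g t) t) (hg : Continuous g)
    (h0 : f 0 = 0) :
    ∫ t in (0:ℝ)..1, f t ^ 2 ≤ 4 / π ^ 2 * ∫ t in (0:ℝ)..1, g t ^ 2 := by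
  have hπ : 0 < π := Real.pi_pos
  have hfc : Continuous f := by
    rw [continuous_iff_continuousAt]; exact fun t => (hf t).continuousAt
  -- bounds for f^2 and |g| on [0,1]
  obtain ⟨xf, _, hxf'⟩ := isCompact_Icc.exists_isMaxOn (α := ℝ) (s := Icc (0:ℝ) 1)
    (Set.nonempty_Icc.2 zero_le_one) ((hfc.pow 2).continuousOn)
  have hxf : ∀ y ∈ Icc (0:ℝ) 1, f y ^ 2 ≤ f xf ^ 2 := fun y hy => hxf' hy
  set Mf : ℝ := f xf ^ 2 with hMf
  have hMf0 : 0 ≤ Mf := sq_nonneg _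
  obtain ⟨xg, _, hxg'⟩ := isCompact_Icc.exists_isMaxOn (α := ℝ) (s := Icc (0:ℝ) 1)
    (Set.nonempty_Icc.2 zero_le_one) (hg.abs.continuousOn)
  have hxg : ∀ y ∈ Icc (0:ℝ) 1, |g y| ≤ |g xg| := fun y hy => hxg' hy
  set Mg : ℝ := |g xg| with hMgdef
  have hMg0 : 0 ≤ Mg := abs_nonneg _
  -- the auxiliary functions
  set u : ℝ → ℝ := fun t => π/2 * (1 - t) with hu
  set w : ℝ → ℝ := fun t => π/2 * Real.tan (u t) with hw
  set dw : ℝ → ℝ := fun t => -(π^2/4) * (1 / Real.cos (u t)^2) with hdw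
  have hw1 : w 1 = 0 := by simp [hw, hu]
  have hucont : Continuous u := by fun_prop
  -- main estimate for each ε
  have key : ∀ ε : ℝ, 0 < ε → ε < 1 →
      π^2/4 * ∫ t in (0:ℝ)..1, f t ^ 2 ≤ (∫ t in (0:ℝ)..1, g t ^ 2) + ε * (π^2/4 * Mf + Mg^2) := by
    intro ε hε0 hε1
    have hε1' : ε ≤ 1 := le_of_lt hε1
    have huIcc : Set.uIcc ε 1 = Icc ε 1 := Set.uIcc_of_le hε1'
    have hcos : ∀ t ∈ Icc ε 1, 0 < Real.cos (u t) := by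
      intro t ht
      apply Real.cos_pos_of_mem_Ioo
      constructor
      · have : u t ≥ 0 := by
          simp only [hu]; nlinarith [ht.2]
        linarith
      · simp only [hu]; nlinarith [ht.1]
    have hwderiv : ∀ t ∈ Icc ε 1, HasDerivAt w (dw t) t := by
      intro t ht
      have h1 : HasDerivAt u (-(π/2)) t := by
        have := ((hasDerivAt_id t).const_sub 1).const_mul (π/2)
        simpa [hu] using this
      have h2 : HasDerivAt Real.tan (1 / Real.cos (u t)^2) (u t) :=
        Real.hasDerivAt_tan (hcos t ht).ne'
      have h3 := (h2.comp t h1).const_mul (π/2)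
      have e : dw t = π / 2 * (1 / Real.cos (u t) ^ 2 * -(π / 2)) := by simp only [hdw]; ring
      rw [e]; exact h3
    have hcoscont : ContinuousOn (fun t => Real.cos (u t)) (Icc ε 1) :=
      (Real.continuous_cos.comp hucont).continuousOn
    have hcosne : ∀ t ∈ Icc ε 1, Real.cos (u t) ^ 2 ≠ 0 :=
      fun t ht => pow_ne_zero 2 (hcos t ht).ne'
    have hdwcont : ContinuousOn dw (Icc ε 1) := by
      apply ContinuousOn.mul continuousOn_const
      exact ContinuousOn.div continuousOn_const (hcoscont.pow 2) hcosne
    have hwcont : ContinuousOn w (Icc ε 1) := by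
      have : ∀ t ∈ Icc ε 1, w t = π/2 * (Real.sin (u t) / Real.cos (u t)) := by
        intro t ht; simp [hw, Real.tan_eq_sin_div_cos]
      intro t ht
      apply ContinuousWithinAt.congr _ this (this t ht)
      apply ContinuousWithinAt.mul continuousWithinAt_const
      exact ContinuousWithinAt.div ((Real.continuous_sin.comp hucont).continuousWithinAt)
        (hcoscont t ht) (fun h => (hcos t ht).ne' (by simpa using h))
    -- FTC: integration by parts term
    set F' : ℝ → ℝ := fun t => dw t * f t ^ 2 + w t * (2 * f t * g t) with hF'
    have hF'cont : ContinuousOn F' (Icc ε 1) := by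
      apply ContinuousOn.add
      · exact hdwcont.mul ((hfc.pow 2).continuousOn)
      · exact hwcont.mul (by fun_prop)
    have hF'int : IntervalIntegrable F' volume ε 1 := by
      apply ContinuousOn.intervalIntegrable; rwa [huIcc]
    have hder : ∀ t ∈ Set.uIcc ε 1, HasDerivAt (fun s => w s * f s ^ 2) (F' t) t := by
      intro t ht
      rw [huIcc] at ht
      have hp : HasDerivAt (fun s => f s ^ 2) (2 * f t * g t) t := by
        have := (hf t).fun_pow 2
        simpa [pow_one] using this
      exact (hwderiv t ht).mul hp
    have hibp : ∫ t in ε..1, F' t = - (w ε * f ε ^ 2) := by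
      have heq := intervalIntegral.integral_eq_sub_of_hasDerivAt hder hF'int
      rw [heq]
      show w 1 * f 1 ^ 2 - w ε * f ε ^ 2 = -(w ε * f ε ^ 2)
      rw [hw1]; ring
    -- nonnegativity of the square
    have hsq : 0 ≤ ∫ t in ε..1, (g t - w t * f t) ^ 2 := by
      apply intervalIntegral.integral_nonneg hε1'
      intro t _; positivity
    -- integrability of pieces
    have hg2int : IntervalIntegrable (fun t => g t ^ 2) volume ε 1 :=
      (hg.pow 2).intervalIntegrable ε 1
    have hqint : IntervalIntegrable (fun t => (dw t + w t ^ 2) * f t ^ 2) volume ε 1 := by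
      apply ContinuousOn.intervalIntegrable
      rw [huIcc]
      exact ((hdwcont.add (hwcont.pow 2)).mul ((hfc.pow 2).continuousOn))
    -- splitting
    have hsplit : ∫ t in ε..1, (g t - w t * f t) ^ 2
        = (∫ t in ε..1, g t ^ 2) - (∫ t in ε..1, F' t)
          + ∫ t in ε..1, (dw t + w t ^ 2) * f t ^ 2 := by
      rw [← intervalIntegral.integral_sub hg2int hF'int,
        ← intervalIntegral.integral_add (hg2int.sub hF'int) hqint]
      apply intervalIntegral.integral_congr
      intro t _
      simp only [hF']; ring
    have hqeq : ∫ t in ε..1, (dw t + w t ^ 2) * f t ^ 2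
        = -(π^2/4) * ∫ t in ε..1, f t ^ 2 := by
      rw [← intervalIntegral.integral_const_mul]
      apply intervalIntegral.integral_congr
      intro t ht
      rw [huIcc] at ht
      have hc := hcos t ht
      have hc2 : Real.cos (u t) ^ 2 ≠ 0 := pow_ne_zero 2 (hcos t ht).ne'
      have hident : dw t + w t ^ 2 = -(π^2/4) := by
        have hsc : Real.sin (u t) ^ 2 = 1 - Real.cos (u t) ^ 2 := by
          nlinarith [Real.sin_sq_add_cos_sq (u t)]
        simp only [hdw, hw]
        rw [Real.tan_eq_sin_div_cos]
        field_simp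
        rw [hsc]; ring
      show (dw t + w t ^ 2) * f t ^ 2 = -(π^2/4) * f t ^ 2
      rw [hident]
    -- bound on the boundary term
    have hfε : f ε ^ 2 ≤ (Mg * ε)^2 := by
      have hb : ∀ x ∈ Icc (0:ℝ) 1, HasDerivWithinAt f (g x) (Icc (0:ℝ) 1) x :=
        fun x _ => (hf x).hasDerivWithinAt
      have := Convex.norm_image_sub_le_of_norm_hasDerivWithin_le hb
        (fun x hx => by simpa using hxg x hx) (convex_Icc _ _)
        (Set.mem_Icc.2 ⟨le_refl 0, zero_le_one⟩)
        (Set.mem_Icc.2 ⟨le_of_lt hε0, hε1'⟩)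
      rw [h0, sub_zero] at this
      have habs : |f ε| ≤ Mg * ε := by
        rw [Real.norm_eq_abs, Real.norm_eq_abs, sub_zero, abs_of_pos hε0] at this
        exact this
      calc f ε ^ 2 = |f ε| ^ 2 := (sq_abs _).symm
        _ ≤ (Mg * ε) ^ 2 := by
            exact pow_le_pow_left₀ (abs_nonneg _) habs 2
    have hwε : w ε ≤ 1/ε := by
      have h1 : u ε = π/2 - π/2 * ε := by simp only [hu]; ring
      have h2 : Real.tan (u ε) = (Real.tan (π/2 * ε))⁻¹ := by
        rw [h1, ← Real.tan_pi_div_two_sub]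
      have h3 : π/2 * ε < Real.tan (π/2 * ε) :=
        Real.lt_tan (by positivity) (by nlinarith)
      have h4 : 0 < π/2 * ε := by positivity
      have h5 : (Real.tan (π/2 * ε))⁻¹ ≤ (π/2 * ε)⁻¹ :=
        inv_anti₀ h4 h3.le
      have hwe : w ε = π/2 * (Real.tan (π/2*ε))⁻¹ := by
        simp only [hw]; rw [h2]
      calc w ε = π/2 * (Real.tan (π/2*ε))⁻¹ := hwe
        _ ≤ π/2 * (π/2 * ε)⁻¹ := by
            apply mul_le_mul_of_nonneg_left h5 (by positivity)
        _ = 1/ε := by field_simp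
    have hbdry : w ε * f ε ^ 2 ≤ ε * Mg ^ 2 := by
      have h1 : w ε * f ε ^2 ≤ (1/ε) * f ε ^2 := by
        apply mul_le_mul_of_nonneg_right hwε (sq_nonneg _)
      have h2 : (1/ε) * f ε ^ 2 ≤ (1/ε) * (Mg * ε)^2 := by
        apply mul_le_mul_of_nonneg_left hfε (by positivity)
      have h3 : (1/ε) * (Mg * ε)^2 = ε * Mg^2 := by field_simp
      linarith
    -- tail and head estimates
    have hg2int0ε : IntervalIntegrable (fun t => g t ^2) volume 0 ε :=
      (hg.pow 2).intervalIntegrable 0 ε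
    have hf2int0ε : IntervalIntegrable (fun t => f t ^2) volume 0 ε :=
      (hfc.pow 2).intervalIntegrable 0 ε
    have hf2intε1 : IntervalIntegrable (fun t => f t ^2) volume ε 1 :=
      (hfc.pow 2).intervalIntegrable ε 1
    have hadd_g : (∫ t in (0:ℝ)..ε, g t ^2) + (∫ t in ε..1, g t ^2) = ∫ t in (0:ℝ)..1, g t ^2 :=
      intervalIntegral.integral_add_adjacent_intervals hg2int0ε hg2int
    have hadd_f : (∫ t in (0:ℝ)..ε, f t ^2) + (∫ t in ε..1, f t ^2) = ∫ t in (0:ℝ)..1, f t ^2 :=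
      intervalIntegral.integral_add_adjacent_intervals hf2int0ε hf2intε1
    have htail : (0:ℝ) ≤ ∫ t in (0:ℝ)..ε, g t ^2 :=
      intervalIntegral.integral_nonneg hε0.le (fun t _ => sq_nonneg _)
    have hhead : (∫ t in (0:ℝ)..ε, f t ^2) ≤ ε * Mf := by
      have h1 : (∫ t in (0:ℝ)..ε, f t ^2) ≤ ∫ t in (0:ℝ)..ε, Mf := by
        apply intervalIntegral.integral_mono_on hε0.le hf2int0ε
          (intervalIntegrable_const)
        intro x hx
        exact hxf x ⟨hx.1, le_trans hx.2 hε1'⟩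
      simpa using h1
    -- combine
    rw [hsplit, hibp, hqeq] at hsq
    have h5 := mul_le_mul_of_nonneg_left hhead (le_of_lt (by positivity : (0:ℝ) < π^2/4))
    have h6 : π^2/4 * (∫ t in (0:ℝ)..ε, f t ^2) + π^2/4 * (∫ t in ε..1, f t ^2)
        = π^2/4 * ∫ t in (0:ℝ)..1, f t ^2 := by rw [← hadd_f]; ring
    linarith [hsq, hbdry, htail, h5, hadd_g, h6]
  -- take ε → 0
  have hK : (0:ℝ) ≤ π^2/4 * Mf + Mg^2 := by positivity
  have hmain : π^2/4 * ∫ t in (0:ℝ)..1, f t ^2 ≤ ∫ t in (0:ℝ)..1, g t ^2 :=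
    eps_limit hK (fun ε h1 h2 => key ε h1 h2)
  have hone : 4/π^2 * (π^2/4) = 1 := by field_simp
  calc (∫ t in (0:ℝ)..1, f t ^2)
      = (4/π^2 * (π^2/4)) * ∫ t in (0:ℝ)..1, f t ^2 := by rw [hone, one_mul]
    _ = 4/π^2 * (π^2/4 * ∫ t in (0:ℝ)..1, f t ^2) := by ring
    _ ≤ 4/π^2 * ∫ t in (0:ℝ)..1, g t ^2 := by
        exact mul_le_mul_of_nonneg_left hmain (by positivity)

-- continuity of partial derivatives
lemma pd_continuous {n : ℕ} (e : (Fin n → ℝ) → ℝ) (he : ContDiff ℝ 1 e) (p : Fin n) :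
    Continuous (pd p e) := by
  have h1 : Continuous (fun x => fderiv ℝ e x) := (he.continuous_fderiv one_ne_zero)
  exact h1.clm_apply continuous_const

-- update as an affine map
lemma update_eq_affine {n : ℕ} (z : Fin n → ℝ) (p : Fin n) :
    (fun s : ℝ => Function.update z p s) = fun s => z + (s - z p) • (Pi.single p 1 : Fin n → ℝ) := by
  funext s i
  by_cases h : i = p
  · subst h; simp
  · simp [Function.update_of_ne h, Pi.single_eq_of_ne h]

lemma hasDerivAt_slice {n : ℕ} (e : (Fin n → ℝ) → ℝ) (he : ContDiff ℝ 1 e)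
    (z : Fin n → ℝ) (p : Fin n) (t : ℝ) :
    HasDerivAt (fun s => e (Function.update z p s)) (pd p e (Function.update z p t)) t := by
  have h2 : HasDerivAt (fun s : ℝ => s - z p) 1 t := (hasDerivAt_id t).sub_const (z p)
  have h3 := h2.smul_const (Pi.single p 1 : Fin n → ℝ)
  have h1 : HasDerivAt (fun s : ℝ => Function.update z p s) (Pi.single p (1:ℝ)) t := by
    rw [update_eq_affine]
    simpa using h3.const_add z
  have hF := ((he.differentiable one_ne_zero) (Function.update z p t)).hasFDerivAt
  have := hF.comp_hasDerivAt t h1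
  exact this

lemma continuous_slice_update {n : ℕ} (z : Fin n → ℝ) (p : Fin n) :
    Continuous (fun s : ℝ => Function.update z p s) := by
  rw [update_eq_affine]
  fun_prop

lemma ae_pi_mem_Icc {ι : Type} [Fintype ι] :
    ∀ᵐ (y : ι → ℝ) ∂(Measure.pi fun _ : ι => volume.restrict (Icc (0:ℝ) 1)),
      ∀ i, y i ∈ Icc (0:ℝ) 1 := by
  haveI : IsProbabilityMeasure (volume.restrict (Icc (0:ℝ) 1)) := by
    constructor
    rw [Measure.restrict_apply MeasurableSet.univ]
    simp [Real.volume_Icc]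
  have hA : MeasurableSet (Set.univ.pi fun _ : ι => Icc (0:ℝ) 1) :=
    MeasurableSet.univ_pi fun _ => measurableSet_Icc
  have hμIcc : (volume.restrict (Icc (0:ℝ) 1)) (Icc (0:ℝ) 1) = 1 := by
    rw [Measure.restrict_apply measurableSet_Icc]; simp [Real.volume_Icc]
  have hcompl : (Measure.pi fun _ : ι => volume.restrict (Icc (0:ℝ) 1))
      ((Set.univ.pi fun _ => Icc (0:ℝ) 1)ᶜ) = 0 := by
    rw [measure_compl hA (measure_ne_top _ _), Measure.pi_pi]
    simp [hμIcc]
  rw [MeasureTheory.ae_iff]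
  have hset : {y : ι → ℝ | ¬ ∀ i, y i ∈ Icc (0:ℝ) 1}
      = (Set.univ.pi fun _ : ι => Icc (0:ℝ) 1)ᶜ := by
    ext y
    simp only [Set.mem_setOf_eq, Set.mem_compl_iff, Set.mem_univ_pi]
  rw [hset]
  exact hcompl

lemma wirtingerN (n : ℕ) (hn : 1 ≤ n) (e : (Fin n → ℝ) → ℝ) (he : ContDiff ℝ 1 e)
    (hD : ∀ x ∈ cube n, (∃ p, x p = 0) → e x = 0) :
    ∫ x in cube n, (e x)^2 ≤ 4/(π^2*n) * ∫ x in cube n, gradSq e x := by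
  have hπ : (0:ℝ) < π := Real.pi_pos
  have hec : Continuous e := he.continuous
  have hpdc : ∀ p, Continuous (pd p e) := pd_continuous e he
  set μ1 : Measure ℝ := volume.restrict (Icc (0:ℝ) 1) with hμ1
  haveI : IsProbabilityMeasure μ1 := by
    constructor
    rw [hμ1, Measure.restrict_apply MeasurableSet.univ]
    simp [Real.volume_Icc]
  have hcube_meas : MeasurableSet (cube n) :=
    MeasurableSet.univ_pi fun _ => measurableSet_Icc
  have hcube_cpt : IsCompact (cube n) := isCompact_univ_pi fun _ => isCompact_Icc
  -- the restricted volume is a product of restricted measures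
  have hpi : Measure.pi (fun _ : Fin n => μ1) = volume.restrict (cube n) := by
    apply Measure.pi_eq
    intro s hs
    rw [Measure.restrict_apply (MeasurableSet.univ_pi hs)]
    have hsect : Set.univ.pi s ∩ cube n = Set.univ.pi (fun i => s i ∩ Icc (0:ℝ) 1) := by
      rw [cube, ← Set.pi_inter_distrib]
    rw [hsect, volume_pi, Measure.pi_pi]
    exact Finset.prod_congr rfl fun i _ => (Measure.restrict_apply (hs i)).symm
  -- slice inequality (in lintegral form)
  have hslice : ∀ (p : Fin n) (z : Fin n → ℝ), (∀ i, i ≠ p → z i ∈ Icc (0:ℝ) 1) →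
      (∫⁻ t, ENNReal.ofReal (e (Function.update z p t) ^ 2) ∂μ1)
        ≤ ∫⁻ t, ENNReal.ofReal (4/π^2 * pd p e (Function.update z p t) ^ 2) ∂μ1 := by
    intro p z hz
    set F : ℝ → ℝ := fun t => e (Function.update z p t) with hF
    set G : ℝ → ℝ := fun t => pd p e (Function.update z p t) with hG
    have hFc : Continuous F := hec.comp (continuous_slice_update z p)
    have hGc : Continuous G := (hpdc p).comp (continuous_slice_update z p)
    have hF0 : F 0 = 0 := by
      apply hD
      · intro i _
        by_cases h : i = p
        · subst h; simp
        · simp only [Function.update_of_ne h]; exact hz i h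
      · exact ⟨p, by simp⟩
    have hw := wirtinger1 F G (fun t => hasDerivAt_slice e he z p t) hGc hF0
    -- convert both sides
    have hIF : Integrable (fun t => F t ^ 2) μ1 := by
      rw [hμ1]
      exact (hFc.pow 2).integrableOn_Icc
    have hIG : Integrable (fun t => 4/π^2 * G t ^ 2) μ1 := by
      rw [hμ1]
      exact (continuous_const.mul (hGc.pow 2)).integrableOn_Icc
    have h1 : (∫⁻ t, ENNReal.ofReal (F t ^ 2) ∂μ1) = ENNReal.ofReal (∫ t, F t ^ 2 ∂μ1) :=
      (ofReal_integral_eq_lintegral_ofReal hIF (Filter.Eventually.of_forall fun t => sq_nonneg _)).symm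
    have h2 : (∫⁻ t, ENNReal.ofReal (4/π^2 * G t ^ 2) ∂μ1)
        = ENNReal.ofReal (∫ t, 4/π^2 * G t ^ 2 ∂μ1) :=
      (ofReal_integral_eq_lintegral_ofReal hIG (Filter.Eventually.of_forall fun t => by positivity)).symm
    rw [h1, h2]
    apply ENNReal.ofReal_le_ofReal
    have e1 : ∫ t, F t ^ 2 ∂μ1 = ∫ t in (0:ℝ)..1, F t ^ 2 := by
      rw [hμ1, intervalIntegral.integral_of_le zero_le_one]
      exact MeasureTheory.integral_Icc_eq_integral_Ioc
    have e2 : ∫ t, 4/π^2 * G t ^ 2 ∂μ1 = 4/π^2 * ∫ t in (0:ℝ)..1, G t ^ 2 := by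
      rw [hμ1, intervalIntegral.integral_of_le zero_le_one]
      rw [← MeasureTheory.integral_Icc_eq_integral_Ioc]
      rw [MeasureTheory.integral_const_mul]
    rw [e1, e2]
    exact hw
  -- per-coordinate inequality
  have key_p : ∀ p : Fin n, ∫ x in cube n, (e x)^2 ≤ 4/π^2 * ∫ x in cube n, (pd p e x)^2 := by
    intro p
    set f : (Fin n → ℝ) → ℝ≥0∞ := fun x => ENNReal.ofReal (e x ^ 2) with hf
    set g : (Fin n → ℝ) → ℝ≥0∞ := fun x => ENNReal.ofReal (4/π^2 * pd p e x ^ 2) with hg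
    have hfm : Measurable f := ENNReal.measurable_ofReal.comp (hec.pow 2).measurable
    have hgm : Measurable g :=
      ENNReal.measurable_ofReal.comp (continuous_const.mul ((hpdc p).pow 2)).measurable
    have hlint : ∫⁻ x, f x ∂(Measure.pi fun _ : Fin n => μ1)
        ≤ ∫⁻ x, g x ∂(Measure.pi fun _ : Fin n => μ1) := by
      rw [lintegral_eq_lmarginal_univ (fun _ => (0:ℝ)),
        lintegral_eq_lmarginal_univ (fun _ => (0:ℝ))]
      rw [lmarginal_erase' _ hfm (Finset.mem_univ p),
        lmarginal_erase' _ hgm (Finset.mem_univ p)]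
      simp only [lmarginal]
      apply lintegral_mono_ae
      rw [hμ1]
      filter_upwards [ae_pi_mem_Icc] with y hy
      rw [← hμ1]
      apply hslice p
      intro i hip
      have hmem : i ∈ Finset.univ.erase p := Finset.mem_erase.2 ⟨hip, Finset.mem_univ i⟩
      simp only [Function.updateFinset_def, dif_pos hmem]
      exact hy ⟨i, hmem⟩
    -- convert lintegral inequality to Bochner integrals
    have hIe : Integrable (fun x => e x ^ 2) (volume.restrict (cube n)) :=
      ((hec.pow 2).continuousOn).integrableOn_compact hcube_cpt
    have hIpd : Integrable (fun x => 4/π^2 * pd p e x ^ 2) (volume.restrict (cube n)) :=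
      ((continuous_const.mul ((hpdc p).pow 2)).continuousOn).integrableOn_compact hcube_cpt
    rw [hpi] at hlint
    have h1 : ENNReal.ofReal (∫ x in cube n, e x ^ 2)
        = ∫⁻ x, f x ∂(volume.restrict (cube n)) :=
      ofReal_integral_eq_lintegral_ofReal hIe (Filter.Eventually.of_forall fun x => sq_nonneg _)
    have h2 : ENNReal.ofReal (∫ x in cube n, 4/π^2 * pd p e x ^ 2)
        = ∫⁻ x, g x ∂(volume.restrict (cube n)) :=
      ofReal_integral_eq_lintegral_ofReal hIpd (Filter.Eventually.of_forall fun x => by positivity)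
    have h3 : ∫ x in cube n, (e x)^2 ≤ ∫ x in cube n, 4/π^2 * pd p e x ^ 2 := by
      have h4 : (0:ℝ) ≤ ∫ x in cube n, 4/π^2 * pd p e x ^ 2 :=
        integral_nonneg fun x => by positivity
      rw [← ENNReal.ofReal_le_ofReal_iff h4, h1, h2]
      exact hlint
    rwa [MeasureTheory.integral_const_mul] at h3
  -- sum over coordinates
  have hIpd2 : ∀ p : Fin n, Integrable (fun x => pd p e x ^ 2) (volume.restrict (cube n)) :=
    fun p => (((hpdc p).pow 2).continuousOn).integrableOn_compact hcube_cpt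
  have hsum : ∫ x in cube n, gradSq e x = ∑ p : Fin n, ∫ x in cube n, pd p e x ^ 2 := by
    rw [← MeasureTheory.integral_finset_sum Finset.univ fun p _ => hIpd2 p]
    rfl
  have hnX : (n:ℝ) * ∫ x in cube n, (e x)^2 ≤ 4/π^2 * ∫ x in cube n, gradSq e x := by
    have hsle : ∑ _p : Fin n, (∫ x in cube n, (e x)^2)
        ≤ ∑ p : Fin n, 4/π^2 * ∫ x in cube n, pd p e x ^ 2 :=
      Finset.sum_le_sum fun p _ => key_p p
    have hl : ∑ _p : Fin n, (∫ x in cube n, (e x)^2) = (n:ℝ) * ∫ x in cube n, (e x)^2 := by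
      simp [Finset.sum_const, Finset.card_univ]
    have hr : ∑ p : Fin n, 4/π^2 * ∫ x in cube n, pd p e x ^ 2
        = 4/π^2 * ∑ p : Fin n, ∫ x in cube n, pd p e x ^ 2 := by
      rw [Finset.mul_sum]
    rw [hl, hr] at hsle
    rw [hsum]
    exact hsle
  have hn0 : (0:ℝ) < n := by exact_mod_cast hn
  rw [div_mul_eq_mul_div, le_div_iff₀ (by positivity)]
  have h5 := mul_le_mul_of_nonneg_left hnX (le_of_lt (by positivity : (0:ℝ) < π^2))
  have hG0 : (0:ℝ) ≤ ∫ x in cube n, gradSq e x :=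
    integral_nonneg fun x => Finset.sum_nonneg fun p _ => sq_nonneg _
  have h6 : π^2 * (4/π^2 * ∫ x in cube n, gradSq e x) = 4 * ∫ x in cube n, gradSq e x := by
    field_simp
  nlinarith [h5, h6]

lemma negPhi_form {n : ℕ} {χ σ lam2 : ℝ} (h : NegDefM (PhiM n χ σ lam2)) (a b c : ℝ) :
    2*(Real.sqrt n*(1+σ)*χ) * (a*b) + ((n:ℝ)-1)*(1+σ)*χ * (b*c)
      ≤ ((1-σ)/2 - 4*lam2/(π^2*n)) * a^2 + (1-σ)/2 * b^2 + lam2 * c^2 := by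
  have h2 := h.posSemidef.dotProduct_mulVec_nonneg ![a, b, c]
  simp [PhiM, Matrix.mulVec, dotProduct, Fin.sum_univ_three, Matrix.neg_apply,
    Matrix.cons_val_zero, Matrix.cons_val_one, Matrix.head_cons,
    Matrix.cons_val_two, Matrix.tail_cons] at h2
  nlinarith [h2]

end WirtingerHelpers

set_option maxHeartbeats 1000000

/-- **Coupling inequality at the switching times (proof of Theorem 2).** Let
`σ = e^{−2δT*}` and suppose `Φ ≺ 0`. Then for every continuously differentiable
`e` vanishing on `Γ_D` and every continuous `v`, the forward/backward Lyapunov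
functionals
`V^± = ½∫_Ω (|∇e|² + v²) dx ± χ∫_Ω [2(xᵀ∇e) + (n−1)e] v dx + (χk(n−1)/2)∫_{Γ_N} e² dΓ`
satisfy `e^{−2δT*} V^− ≤ V^+` and `e^{−2δT*} V^+ ≤ V^−`. -/
theorem coupling_inequality (n : ℕ) (hn : 1 ≤ n) (k χ δ Tstar lam2 : ℝ)
    (hk : 0 < k) (hχ : 0 < χ) (hδ : 0 < δ) (hTs : 0 < Tstar) (hl2 : 0 < lam2)
    (hΦ : NegDefM (PhiM n χ (Real.exp (-2 * δ * Tstar)) lam2))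
    (e : (Fin n → ℝ) → ℝ) (he : ContDiff ℝ 1 e)
    (hD : ∀ x ∈ cube n, (∃ p, x p = 0) → e x = 0)
    (v : (Fin n → ℝ) → ℝ) (hv : Continuous v)
    (Vplus Vminus : ℝ)
    (hVp : Vplus = (1/2) * (∫ x in cube n, (gradSq e x + (v x) ^ 2))
        + χ * (∫ x in cube n, (2 * xGrad e x + ((n:ℝ) - 1) * e x) * v x)
        + χ * k * ((n:ℝ) - 1) / 2 * faceInt (fun x => (e x) ^ 2))
    (hVm : Vminus = (1/2) * (∫ x in cube n, (gradSq e x + (v x) ^ 2))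
        - χ * (∫ x in cube n, (2 * xGrad e x + ((n:ℝ) - 1) * e x) * v x)
        + χ * k * ((n:ℝ) - 1) / 2 * faceInt (fun x => (e x) ^ 2)) :
    Real.exp (-2 * δ * Tstar) * Vminus ≤ Vplus ∧
    Real.exp (-2 * δ * Tstar) * Vplus ≤ Vminus := by

  have hπ : (0:ℝ) < π := Real.pi_pos
  have hn1 : (1:ℝ) ≤ (n:ℝ) := by exact_mod_cast hn
  set σ : ℝ := Real.exp (-2 * δ * Tstar) with hσdef
  have hσ0 : 0 < σ := Real.exp_pos _
  have hσ1 : σ < 1 := by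
    rw [hσdef, Real.exp_lt_one_iff]
    nlinarith
  -- continuity facts
  have hec : Continuous e := he.continuous
  have hpdc : ∀ p, Continuous (pd p e) := pd_continuous e he
  have hgc : Continuous (gradSq e) := by
    apply continuous_finset_sum
    intro p _
    exact (hpdc p).pow 2
  have hxgc : Continuous (xGrad e) := by
    apply continuous_finset_sum
    intro p _
    exact (continuous_apply p).mul (hpdc p)
  have hcube_meas : MeasurableSet (cube n) :=
    MeasurableSet.univ_pi fun _ => measurableSet_Icc
  have hcube_cpt : IsCompact (cube n) := isCompact_univ_pi fun _ => isCompact_Icc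
  -- integrability facts
  have hIg : IntegrableOn (gradSq e) (cube n) volume :=
    hgc.continuousOn.integrableOn_compact hcube_cpt
  have hIv2 : IntegrableOn (fun x => v x ^ 2) (cube n) volume :=
    ((hv.pow 2)).continuousOn.integrableOn_compact hcube_cpt
  have hIA : IntegrableOn (fun x => gradSq e x + v x ^ 2) (cube n) volume := hIg.add hIv2
  have hIe2 : IntegrableOn (fun x => e x ^ 2) (cube n) volume :=
    ((hec.pow 2)).continuousOn.integrableOn_compact hcube_cpt
  have hJc : Continuous (fun x => (2 * xGrad e x + ((n:ℝ) - 1) * e x) * v x) := by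
    apply Continuous.mul _ hv
    exact (continuous_const.mul hxgc).add (continuous_const.mul hec)
  have hIJ : IntegrableOn (fun x => (2 * xGrad e x + ((n:ℝ) - 1) * e x) * v x) (cube n) volume :=
    hJc.continuousOn.integrableOn_compact hcube_cpt
  have hIJb : IntegrableOn (fun x => |(2 * xGrad e x + ((n:ℝ) - 1) * e x) * v x|) (cube n) volume :=
    hJc.abs.continuousOn.integrableOn_compact hcube_cpt
  -- notation
  set A : ℝ := ∫ x in cube n, (gradSq e x + v x ^ 2) with hA
  set J : ℝ := ∫ x in cube n, (2 * xGrad e x + ((n:ℝ) - 1) * e x) * v x with hJ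
  set Jb : ℝ := ∫ x in cube n, |(2 * xGrad e x + ((n:ℝ) - 1) * e x) * v x| with hJb
  set I1 : ℝ := ∫ x in cube n, gradSq e x with hI1
  set W : ℝ := ∫ x in cube n, (e x) ^ 2 with hW
  set C : ℝ := χ * k * ((n:ℝ) - 1) / 2 * faceInt (fun x => (e x) ^ 2) with hC
  -- nonnegativity of the face integral term
  have hC0 : 0 ≤ C := by
    rw [hC]
    apply mul_nonneg
    · exact div_nonneg (mul_nonneg (mul_nonneg hχ.le hk.le) (by linarith)) (by norm_num)
    · apply Finset.sum_nonneg
      intro p _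
      exact setIntegral_nonneg hcube_meas fun x _ => sq_nonneg _
  -- pointwise estimate
  have hpoint : ∀ x ∈ cube n,
      (1+σ)*χ * |(2 * xGrad e x + ((n:ℝ) - 1) * e x) * v x|
        ≤ (1-σ)/2 * (gradSq e x + v x ^ 2) - 4*lam2/(π^2*n) * gradSq e x + lam2 * e x ^ 2 := by
    intro x hx
    have hxp : ∀ p, x p ∈ Set.Icc (0:ℝ) 1 := fun p => hx p (Set.mem_univ p)
    set a : ℝ := Real.sqrt (gradSq e x) with ha
    set b : ℝ := |v x| with hb
    set c : ℝ := |e x| with hc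
    have hg0 : 0 ≤ gradSq e x := Finset.sum_nonneg fun p _ => sq_nonneg _
    have ha2 : a ^ 2 = gradSq e x := Real.sq_sqrt hg0
    have hb2 : b ^ 2 = v x ^ 2 := sq_abs _
    have hc2 : c ^ 2 = e x ^ 2 := sq_abs _
    have ha0 : 0 ≤ a := Real.sqrt_nonneg _
    have hb0 : 0 ≤ b := abs_nonneg _
    have hc0 : 0 ≤ c := abs_nonneg _
    -- Cauchy-Schwarz bound for xGrad
    have hxg : |xGrad e x| ≤ Real.sqrt n * a := by
      have hcs := Finset.sum_mul_sq_le_sq_mul_sq Finset.univ (fun p => x p) (fun p => pd p e x)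
      have hxsum : ∑ p, (x p) ^ 2 ≤ (n:ℝ) := by
        have h1 : ∀ p ∈ Finset.univ, (x p) ^ 2 ≤ 1 := by
          intro p _
          have := hxp p
          nlinarith [this.1, this.2]
        calc ∑ p, (x p) ^ 2 ≤ ∑ _p : Fin n, (1:ℝ) := Finset.sum_le_sum h1
          _ = (n:ℝ) := by simp
      have hsq : |xGrad e x| ^ 2 ≤ (Real.sqrt n * a) ^ 2 := by
        rw [sq_abs]
        have h2 : (Real.sqrt n * a)^2 = (n:ℝ) * gradSq e x := by
          rw [mul_pow, ha2, Real.sq_sqrt (by positivity : (0:ℝ) ≤ (n:ℝ))]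
        rw [h2]
        calc (xGrad e x) ^ 2 = (∑ p, x p * pd p e x) ^ 2 := rfl
          _ ≤ (∑ p, (x p)^2) * (∑ p, (pd p e x)^2) := hcs
          _ ≤ (n:ℝ) * gradSq e x := by
              apply mul_le_mul_of_nonneg_right hxsum
              exact Finset.sum_nonneg fun p _ => sq_nonneg _
      exact le_of_pow_le_pow_left₀ (by norm_num) (by positivity) hsq
    -- pointwise absolute value bound
    have habs : |(2 * xGrad e x + ((n:ℝ) - 1) * e x) * v x|
        ≤ 2 * (Real.sqrt n * a) * b + ((n:ℝ) - 1) * c * b := by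
      rw [abs_mul]
      have h1 : |2 * xGrad e x + ((n:ℝ) - 1) * e x| ≤ 2 * (Real.sqrt n * a) + ((n:ℝ) - 1) * c := by
        calc |2 * xGrad e x + ((n:ℝ) - 1) * e x|
            ≤ |2 * xGrad e x| + |((n:ℝ) - 1) * e x| := abs_add_le _ _
          _ = 2 * |xGrad e x| + ((n:ℝ) - 1) * c := by
              rw [abs_mul, abs_mul, abs_of_nonneg (by norm_num : (0:ℝ) ≤ 2),
                abs_of_nonneg (by linarith : (0:ℝ) ≤ (n:ℝ) - 1)]
          _ ≤ 2 * (Real.sqrt n * a) + ((n:ℝ) - 1) * c := by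
              have := mul_le_mul_of_nonneg_left hxg (by norm_num : (0:ℝ) ≤ 2)
              linarith
      calc |2 * xGrad e x + ((n:ℝ) - 1) * e x| * b
          ≤ (2 * (Real.sqrt n * a) + ((n:ℝ) - 1) * c) * b :=
            mul_le_mul_of_nonneg_right h1 hb0
        _ = 2 * (Real.sqrt n * a) * b + ((n:ℝ) - 1) * c * b := by ring
    have hform := negPhi_form hΦ a b c
    have hmul := mul_le_mul_of_nonneg_left habs
      (by positivity : (0:ℝ) ≤ (1+σ)*χ)
    have hexp : (1+σ)*χ * (2 * (Real.sqrt n * a) * b + ((n:ℝ) - 1) * c * b)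
        = 2*(Real.sqrt n*(1+σ)*χ) * (a*b) + ((n:ℝ)-1)*(1+σ)*χ * (b*c) := by ring
    rw [hexp] at hmul
    have := le_trans hmul hform
    rw [ha2, hb2, hc2] at this
    linarith
  -- integrate the pointwise estimate
  have hint : 0 ≤ ∫ x in cube n,
      ((1-σ)/2 * (gradSq e x + v x ^ 2) - 4*lam2/(π^2*n) * gradSq e x + lam2 * e x ^ 2
        - (1+σ)*χ * |(2 * xGrad e x + ((n:ℝ) - 1) * e x) * v x|) := by
    apply setIntegral_nonneg hcube_meas
    intro x hx
    have := hpoint x hx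
    linarith
  have hsplit : (∫ x in cube n,
      ((1-σ)/2 * (gradSq e x + v x ^ 2) - 4*lam2/(π^2*n) * gradSq e x + lam2 * e x ^ 2
        - (1+σ)*χ * |(2 * xGrad e x + ((n:ℝ) - 1) * e x) * v x|))
      = (1-σ)/2 * A - 4*lam2/(π^2*n) * I1 + lam2 * W - (1+σ)*χ * Jb := by
    have hI1' : IntegrableOn (fun x => (1-σ)/2 * (gradSq e x + v x ^ 2)) (cube n) volume :=
      hIA.const_mul _
    have hI2' : IntegrableOn (fun x => 4*lam2/(π^2*n) * gradSq e x) (cube n) volume :=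
      hIg.const_mul _
    have hI3' : IntegrableOn (fun x => lam2 * e x ^ 2) (cube n) volume :=
      hIe2.const_mul _
    have hI4' : IntegrableOn (fun x => (1+σ)*χ * |(2 * xGrad e x + ((n:ℝ) - 1) * e x) * v x|)
        (cube n) volume := hIJb.const_mul _
    have hI5' : IntegrableOn (fun x => (1-σ)/2 * (gradSq e x + v x ^ 2)
        - 4*lam2/(π^2*n) * gradSq e x) (cube n) volume := hI1'.sub hI2'
    have hI6' : IntegrableOn (fun x => (1-σ)/2 * (gradSq e x + v x ^ 2)
        - 4*lam2/(π^2*n) * gradSq e x + lam2 * e x ^ 2) (cube n) volume := hI5'.add hI3'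
    rw [integral_sub hI6' hI4', integral_add hI5' hI3', integral_sub hI1' hI2',
      integral_const_mul, integral_const_mul, integral_const_mul, integral_const_mul]
  rw [hsplit] at hint
  -- Wirtinger inequality
  have hwirt : W ≤ 4/(π^2*n) * I1 := wirtingerN n hn e he hD
  have hWI : lam2 * W - 4*lam2/(π^2*n) * I1 ≤ 0 := by
    have := mul_le_mul_of_nonneg_left hwirt (le_of_lt hl2)
    have h2 : lam2 * (4/(π^2*n) * I1) = 4*lam2/(π^2*n) * I1 := by ring
    linarith [this, h2.le]
  -- |J| ≤ Jb
  have hJabs : |J| ≤ Jb := by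
    rw [hJ, hJb]
    have := MeasureTheory.norm_integral_le_integral_norm
      (μ := volume.restrict (cube n)) (fun x => (2 * xGrad e x + ((n:ℝ) - 1) * e x) * v x)
    simpa only [Real.norm_eq_abs] using this
  -- key inequality
  have hkey : (1+σ)*χ * |J| ≤ (1-σ)/2 * A := by
    have h1 : (1+σ)*χ * |J| ≤ (1+σ)*χ * Jb :=
      mul_le_mul_of_nonneg_left hJabs (by positivity)
    linarith
  -- conclude
  have hJ1 : (1+σ)*χ*(-|J|) ≤ (1+σ)*χ*J :=
    mul_le_mul_of_nonneg_left (neg_abs_le J) (by positivity)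
  have hJ2 : (1+σ)*χ*J ≤ (1+σ)*χ*|J| :=
    mul_le_mul_of_nonneg_left (le_abs_self J) (by positivity)
  have hCσ : 0 ≤ (1-σ) * C := mul_nonneg (by linarith) hC0
  rw [hVp, hVm]
  constructor
  · linarith [hkey, hJ1, hCσ]
  · linarith [hkey, hJ2, hCσ]
end
end
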